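/- arXiv:2409.00894 — 9 statements merged into one kernel-verified Lean document; each statement's English description precedes it below -/
import Mathlib

section
/- For the deterministic over-parameterized gradient flow of depth parameter D ≥ 0 with arbitrary fixed data z ∈ ℝ, the learned eigenvalue factor t ↦ a(t) b(t)^D is non-decreasing on [0, ∞) (for D = 0 this reads: t ↦ a(t) is non-decreasing). -/
/-!
Write `θ = a b^D β` and `r = z - θ`. Along the flow `θ' = k r` with
`k = (b^{2D} + D² a² b^{2(D-1)}) β² + a² b^{2D} ≥ 0`, so the residual solves the linear
equation `r' = -k r`; by Grönwall it never changes sign, and `r 0 = z`. Since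
`a² - β²` and `b² - D β²` are conserved, `a` and `b` stay positive, so `β' = a b^D r` has the
sign of `z` and `β r ≥ 0` as `β 0 = 0`. Finally
`(a b^D)' = (b^{2D} + D² a² b^{2(D-1)}) β r ≥ 0`.
-/

open Set

section OnIci

variable {f f' v k : ℝ → ℝ}

lemma continuousOn_Ici_of_hasDerivAt (hf : ∀ t, 0 ≤ t → HasDerivAt f (f' t) t) :
    ContinuousOn f (Ici 0) :=
  fun t ht => (hf t ht).continuousAt.continuousWithinAt

lemma monotoneOn_Ici_of_hasDerivAt_nonneg (hf : ∀ t, 0 ≤ t → HasDerivAt f (f' t) t)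
    (hf' : ∀ t, 0 ≤ t → 0 ≤ f' t) : MonotoneOn f (Ici 0) := by
  refine monotoneOn_of_hasDerivWithinAt_nonneg (f' := f') (convex_Ici 0)
    (continuousOn_Ici_of_hasDerivAt hf) (fun t ht => ?_) fun t ht => ?_
  all_goals rw [interior_Ici] at ht
  exacts [(hf t ht.le).hasDerivWithinAt, hf' t ht.le]

lemma eq_of_hasDerivAt_zero_Ici (hf : ∀ t, 0 ≤ t → HasDerivAt f 0 t) {t : ℝ} (ht : 0 ≤ t) :
    f t = f 0 :=
  constant_of_has_deriv_right_zero
    ((continuousOn_Ici_of_hasDerivAt hf).mono Icc_subset_Ici_self)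
    (fun s hs => (hf s hs.1).hasDerivWithinAt) t ⟨ht, le_rfl⟩

lemma pos_of_continuousOn_Ici_of_ne_zero (hf : ContinuousOn f (Ici 0)) (hf0 : 0 < f 0)
    (hne : ∀ t, 0 ≤ t → f t ≠ 0) {t : ℝ} (ht : 0 ≤ t) : 0 < f t := by
  by_contra! hle
  obtain ⟨s, hs, hfs⟩ :=
    intermediate_value_Icc' ht (hf.mono Icc_subset_Ici_self) ⟨hle, hf0.le⟩
  exact hne s hs.1 hfs

lemma eq_zero_of_hasDerivAt_neg_mul_of_eq_zero (hk : ContinuousOn k (Ici 0))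
    (hv : ∀ t, 0 ≤ t → HasDerivAt v (-(k t * v t)) t) {s t : ℝ} (hs : 0 ≤ s) (hst : s ≤ t)
    (hvs : v s = 0) : v t = 0 := by
  obtain ⟨K, hK⟩ := isCompact_Icc.exists_bound_of_continuousOn
    (hk.mono (Icc_subset_Ici_self.trans (Ici_subset_Ici.2 hs)))
  refine eq_zero_of_abs_deriv_le_mul_abs_self_of_eq_zero_right (K := K)
    ((continuousOn_Ici_of_hasDerivAt hv).mono (Icc_subset_Ici_self.trans (Ici_subset_Ici.2 hs)))
    (fun x hx => (hv x (hs.trans hx.1)).hasDerivWithinAt) hvs (fun x hx => ?_) t ⟨hst, le_rfl⟩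
  rw [norm_neg, norm_mul]
  exact mul_le_mul_of_nonneg_right (hK x (Ico_subset_Icc_self hx)) (norm_nonneg _)

lemma mul_nonneg_of_hasDerivAt_neg_mul (hk : ContinuousOn k (Ici 0))
    (hv : ∀ t, 0 ≤ t → HasDerivAt v (-(k t * v t)) t) {t : ℝ} (ht : 0 ≤ t) : 0 ≤ v 0 * v t := by
  by_contra! hneg
  have hzero : (0 : ℝ) ∈ uIcc (v 0) (v t) := by
    rw [mem_uIcc]
    rcases le_total (v 0) 0 with h | h
    · exact Or.inl ⟨h, by nlinarith⟩
    · exact Or.inr ⟨by nlinarith, h⟩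
  obtain ⟨s, hs, hvs⟩ := intermediate_value_uIcc ((continuousOn_Ici_of_hasDerivAt hv).mono
    (by rw [uIcc_of_le ht]; exact Icc_subset_Ici_self)) hzero
  rw [uIcc_of_le ht] at hs
  simp [eq_zero_of_hasDerivAt_neg_mul_of_eq_zero hk hv hs.1 hs.2 hvs] at hneg

lemma mul_nonneg_of_hasDerivAt_mul_of_hasDerivAt_neg_mul (hk : ContinuousOn k (Ici 0))
    (hv : ∀ t, 0 ≤ t → HasDerivAt v (-(k t * v t)) t) {g p : ℝ → ℝ}
    (hg : ∀ t, 0 ≤ t → HasDerivAt g (p t * v t) t) (hp : ∀ t, 0 ≤ t → 0 ≤ p t) (hg0 : g 0 = 0)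
    {t : ℝ} (ht : 0 ≤ t) : 0 ≤ g t * v t := by
  rcases eq_or_ne (v 0) 0 with hv0 | hv0
  · simp [eq_zero_of_hasDerivAt_neg_mul_of_eq_zero hk hv le_rfl ht hv0]
  have hmono : MonotoneOn (fun s => v 0 * g s) (Ici 0) :=
    monotoneOn_Ici_of_hasDerivAt_nonneg (fun s hs => (hg s hs).const_mul (v 0))
      fun s hs => by
        rw [mul_left_comm]
        exact mul_nonneg (hp s hs) (mul_nonneg_of_hasDerivAt_neg_mul hk hv hs)
  have hg_sign : 0 ≤ v 0 * g t := by
    simpa [hg0] using hmono self_mem_Ici ht ht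
  have hv_sign := mul_nonneg_of_hasDerivAt_neg_mul hk hv ht
  have : 0 ≤ v 0 ^ 2 * (g t * v t) := by nlinarith [mul_nonneg hg_sign hv_sign]
  exact (mul_nonneg_iff_of_pos_left (by positivity)).1 this

end OnIci

/-- For `D = 0` the equations for `a` and `β` are those of this flow with `b ≡ 1`. -/
structure IsOverparamFlow (D : ℕ) (z : ℝ) (a b β : ℝ → ℝ) : Prop where
  hasDerivAt_a : ∀ t, 0 ≤ t → HasDerivAt a (b t ^ D * β t * (z - a t * b t ^ D * β t)) t
  hasDerivAt_b : ∀ t, 0 ≤ t →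
    HasDerivAt b (D * a t * b t ^ (D - 1) * β t * (z - a t * b t ^ D * β t)) t
  hasDerivAt_β : ∀ t, 0 ≤ t → HasDerivAt β (a t * b t ^ D * (z - a t * b t ^ D * β t)) t

namespace IsOverparamFlow

variable {D : ℕ} {z : ℝ} {a b β : ℝ → ℝ} (hF : IsOverparamFlow D z a b β)
include hF

lemma sq_sub_sq_eq {t : ℝ} (ht : 0 ≤ t) : a t ^ 2 - β t ^ 2 = a 0 ^ 2 - β 0 ^ 2 :=
  eq_of_hasDerivAt_zero_Ici (f := fun s => a s ^ 2 - β s ^ 2)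
    (fun s hs => (((hF.hasDerivAt_a s hs).fun_pow 2).sub
      ((hF.hasDerivAt_β s hs).fun_pow 2)).congr_deriv (by ring)) ht

lemma sq_sub_mul_sq_eq {t : ℝ} (ht : 0 ≤ t) :
    b t ^ 2 - D * β t ^ 2 = b 0 ^ 2 - D * β 0 ^ 2 := by
  refine eq_of_hasDerivAt_zero_Ici (f := fun s => b s ^ 2 - D * β s ^ 2)
    (fun s hs => (((hF.hasDerivAt_b s hs).fun_pow 2).sub
      (((hF.hasDerivAt_β s hs).fun_pow 2).const_mul (D : ℝ))).congr_deriv ?_) ht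
  rcases D with _ | D
  · simp
  · simp only [Nat.add_sub_cancel, Nat.cast_add, Nat.cast_one]
    ring

lemma a_pos (ha0 : 0 < a 0) (hβ0 : β 0 = 0) {t : ℝ} (ht : 0 ≤ t) : 0 < a t :=
  pos_of_continuousOn_Ici_of_ne_zero (continuousOn_Ici_of_hasDerivAt hF.hasDerivAt_a) ha0
    (fun s hs has => by nlinarith [hF.sq_sub_sq_eq hs, sq_nonneg (β s)]) ht

lemma b_pos (hb0 : 0 < b 0) (hβ0 : β 0 = 0) {t : ℝ} (ht : 0 ≤ t) : 0 < b t :=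
  pos_of_continuousOn_Ici_of_ne_zero (continuousOn_Ici_of_hasDerivAt hF.hasDerivAt_b) hb0
    (fun s hs hbs => by
      have := hF.sq_sub_mul_sq_eq hs
      rw [hbs, hβ0] at this
      nlinarith [mul_nonneg (Nat.cast_nonneg D) (sq_nonneg (β s))]) ht

lemma hasDerivAt_residual (t : ℝ) (ht : 0 ≤ t) :
    HasDerivAt (fun s => z - a s * b s ^ D * β s)
      (-((((b t ^ D) ^ 2 + (D * a t * b t ^ (D - 1)) ^ 2) * β t ^ 2 + (a t * b t ^ D) ^ 2) *
        (z - a t * b t ^ D * β t))) t :=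
  ((hasDerivAt_const t z).sub (((hF.hasDerivAt_a t ht).fun_mul
    ((hF.hasDerivAt_b t ht).fun_pow D)).fun_mul (hF.hasDerivAt_β t ht))).congr_deriv (by ring)

lemma hasDerivAt_factor (t : ℝ) (ht : 0 ≤ t) :
    HasDerivAt (fun s => a s * b s ^ D)
      (((b t ^ D) ^ 2 + (D * a t * b t ^ (D - 1)) ^ 2) * (β t * (z - a t * b t ^ D * β t))) t :=
  ((hF.hasDerivAt_a t ht).fun_mul ((hF.hasDerivAt_b t ht).fun_pow D)).congr_deriv (by ring)

lemma monotoneOn_factor (ha0 : 0 < a 0) (hb0 : 0 < b 0) (hβ0 : β 0 = 0) :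
    MonotoneOn (fun t => a t * b t ^ D) (Ici 0) := by
  have ha := continuousOn_Ici_of_hasDerivAt hF.hasDerivAt_a
  have hb := continuousOn_Ici_of_hasDerivAt hF.hasDerivAt_b
  have hβ := continuousOn_Ici_of_hasDerivAt hF.hasDerivAt_β
  have hsign : ∀ t, 0 ≤ t → 0 ≤ β t * (z - a t * b t ^ D * β t) := fun t ht =>
    mul_nonneg_of_hasDerivAt_mul_of_hasDerivAt_neg_mul
      (k := fun s =>
        ((b s ^ D) ^ 2 + (D * a s * b s ^ (D - 1)) ^ 2) * β s ^ 2 + (a s * b s ^ D) ^ 2)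
      (by fun_prop) hF.hasDerivAt_residual hF.hasDerivAt_β
      (fun s hs => (mul_pos (hF.a_pos ha0 hβ0 hs) (pow_pos (hF.b_pos hb0 hβ0 hs) D)).le) hβ0 ht
  exact monotoneOn_Ici_of_hasDerivAt_nonneg hF.hasDerivAt_factor
    fun t ht => mul_nonneg (by positivity) (hsign t ht)

end IsOverparamFlow

/-- for the deterministic over-parameterized gradient flow of depth
parameter `D ≥ 0` with arbitrary fixed data `z ∈ ℝ`, the learned eigenvalue factor
`t ↦ a(t) b(t)^D` is non-decreasing on `[0, ∞)` (for `D = 0` this reads: `a` is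
non-decreasing, since `b(t)^0 = 1`). -/
theorem eigenvalue_factor_monotone
    (D : ℕ) (lam b₀ z : ℝ) (hlam : 0 < lam) (hb₀ : 0 < b₀)
    (a b β : ℝ → ℝ)
    (hflow :
      (D = 0 ∧ a 0 = Real.sqrt lam ∧ β 0 = 0 ∧
        (∀ t : ℝ, 0 ≤ t → HasDerivAt a (β t * (z - a t * β t)) t) ∧
        (∀ t : ℝ, 0 ≤ t → HasDerivAt β (a t * (z - a t * β t)) t)) ∨
      (1 ≤ D ∧ a 0 = Real.sqrt lam ∧ b 0 = b₀ ∧ β 0 = 0 ∧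
        (∀ t : ℝ, 0 ≤ t →
          HasDerivAt a ((b t) ^ D * β t * (z - a t * (b t) ^ D * β t)) t) ∧
        (∀ t : ℝ, 0 ≤ t →
          HasDerivAt b ((D : ℝ) * a t * (b t) ^ (D - 1) * β t *
            (z - a t * (b t) ^ D * β t)) t) ∧
        (∀ t : ℝ, 0 ≤ t →
          HasDerivAt β (a t * (b t) ^ D * (z - a t * (b t) ^ D * β t)) t))) :
    MonotoneOn (fun t => a t * (b t) ^ D) (Set.Ici (0 : ℝ)) := by
  rcases hflow with ⟨rfl, ha0, hβ0, hda, hdβ⟩ | ⟨-, ha0, hb0, hβ0, hda, hdb, hdβ⟩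
  · have hF : IsOverparamFlow 0 z a (fun _ => 1) β :=
      ⟨by simpa using hda, fun t _ => by simpa using hasDerivAt_const t (1 : ℝ),
        by simpa using hdβ⟩
    simpa using hF.monotoneOn_factor (ha0 ▸ Real.sqrt_pos.2 hlam) one_pos hβ0
  · exact IsOverparamFlow.monotoneOn_factor ⟨hda, hdb, hdβ⟩ (ha0 ▸ Real.sqrt_pos.2 hlam)
      (hb0 ▸ hb₀) hβ0
end

section
/- For the two-layer gradient flow, the product θ(t) = a(t)β(t) satisfies the autonomous ODE θ'(t) = √(λ² + 4θ(t)²) · (z − θ(t)) for all t ≥ 0, with θ(0) = 0. -/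
/-!
The flow conserves `a² − β²` (its derivative is `2aβ(z − θ) − 2βa(z − θ) = 0`), so
`a² − β² = λ` for all `t ≥ 0`. Then `θ' = (a² + β²)(z − θ)` by the product rule, and
`(a² + β²)² = (a² − β²)² + 4(aβ)² = λ² + 4θ²`.
-/

open Real Set

theorem sq_sub_sq_eq_of_hasDerivAt {a b g : ℝ → ℝ}
    (ha : ∀ t, 0 ≤ t → HasDerivAt a (b t * g t) t)
    (hb : ∀ t, 0 ≤ t → HasDerivAt b (a t * g t) t) {t : ℝ} (ht : 0 ≤ t) :
    a t ^ 2 - b t ^ 2 = a 0 ^ 2 - b 0 ^ 2 := by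
  have hderiv : ∀ x, 0 ≤ x → HasDerivAt (fun u => a u ^ 2 - b u ^ 2) 0 x := fun x hx =>
    (((ha x hx).pow 2).sub ((hb x hx).pow 2)).congr_deriv (by push_cast; ring)
  have hcont : ContinuousOn (fun u => a u ^ 2 - b u ^ 2) (Icc 0 t) := fun x hx =>
    (hderiv x hx.1).continuousAt.continuousWithinAt
  exact constant_of_has_deriv_right_zero hcont
    (fun x hx => (hderiv x hx.1).hasDerivWithinAt) t (right_mem_Icc.2 ht)

theorem sqrt_sq_add_four_mul_sq_eq_of_sq_sub_sq_eq {x y c : ℝ} (h : x ^ 2 - y ^ 2 = c) :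
    √(c ^ 2 + 4 * (x * y) ^ 2) = x ^ 2 + y ^ 2 := by
  rw [← h, show (x ^ 2 - y ^ 2) ^ 2 + 4 * (x * y) ^ 2 = (x ^ 2 + y ^ 2) ^ 2 by ring,
    sqrt_sq (by positivity)]

/-- For the two-layer gradient flow, the product `θ(t) = a(t)β(t)` satisfies
the autonomous ODE `θ' = √(λ² + 4θ²)(z − θ)` for all `t ≥ 0`, with `θ(0) = 0`. -/
theorem two_layer_theta_ode
    (lam z : ℝ) (hlam : 0 < lam)
    (a β : ℝ → ℝ)
    (ha0 : a 0 = Real.sqrt lam) (hβ0 : β 0 = 0)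
    (ha : ∀ t : ℝ, 0 ≤ t → HasDerivAt a (β t * (z - a t * β t)) t)
    (hβ : ∀ t : ℝ, 0 ≤ t → HasDerivAt β (a t * (z - a t * β t)) t) :
    a 0 * β 0 = 0 ∧
      ∀ t : ℝ, 0 ≤ t →
        HasDerivAt (fun u => a u * β u)
          (Real.sqrt (lam ^ 2 + 4 * (a t * β t) ^ 2) * (z - a t * β t)) t := by
  have hbalanced : ∀ t, 0 ≤ t → a t ^ 2 - β t ^ 2 = lam := fun t ht => by
    rw [sq_sub_sq_eq_of_hasDerivAt ha hβ ht, ha0, hβ0, sq_sqrt hlam.le]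
    ring
  refine ⟨by rw [hβ0, mul_zero], fun t ht => ?_⟩
  rw [sqrt_sq_add_four_mul_sq_eq_of_sq_sub_sq_eq (hbalanced t ht)]
  exact ((ha t ht).mul (hβ t ht)).congr_deriv (by ring)
end

section
/- Let θ solve θ' = √(λ² + 4θ²)(z − θ) with θ(0) = 0 and let θ̃ solve θ̃' = (λ + 2|θ̃|)(z − θ̃) with θ̃(0) = 0. If z ≥ 0 then for all t ≥ 0: 0 ≤ θ̃(t/√2) ≤ θ(t) ≤ θ̃(t) ≤ z; if z ≤ 0 then for all t ≥ 0: 0 ≥ θ̃(t/√2) ≥ θ(t) ≥ θ̃(t) ≥ z. -/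
/-!
Once the rate is regarded as a given function of time, both equations are linear: if `K' = w`
and `K 0 = 0`, then `θ' = w (z - θ)`, `θ 0 = 0` forces `θ = z (1 - e^{-K})`. Taking for `K`, `K̃`
the integrals of the two rates, `θ = relax z K` and `θ̃ = relax z K̃`, so `K` and `K̃` solve
`K' = f K` and `K̃' = g K̃`, where `f x = √(λ² + 4 (relax z x)²)` and `g x = λ + 2 |relax z x|`.
Since `g / √2 ≤ f ≤ g` and `f` is `2 |z|`-Lipschitz on `[0, ∞)`, comparison of sub- and
supersolutions gives `K̃ (t / √2) ≤ K t ≤ K̃ t`, and `relax z` is monotone (antitone if `z ≤ 0`)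
with values between `0` and `z`.
-/

open Real Set

lemma nonpos_of_hasDerivAt_le_mul {v v' : ℝ → ℝ} (L : ℝ) (h0 : v 0 ≤ 0)
    (hv : ∀ t, 0 ≤ t → HasDerivAt v (v' t) t)
    (hv' : ∀ t, 0 ≤ t → 0 ≤ v t → v' t ≤ L * v t) {T : ℝ} (hT : 0 ≤ T) : v T ≤ 0 := by
  refine le_of_forall_pos_le_add fun ε hε => ?_
  -- barrier `ε e^{(L+1)(t-T)}`, which grows strictly faster than the bound `v' ≤ L v` allows
  have hB : ∀ t, HasDerivAt (fun t => ε * exp ((L + 1) * (t - T)))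
      ((L + 1) * (ε * exp ((L + 1) * (t - T)))) t := fun t =>
    ((((hasDerivAt_id' t).sub_const T).const_mul (L + 1)).exp.const_mul ε).congr_deriv (by ring)
  have hB_pos : ∀ t, 0 < ε * exp ((L + 1) * (t - T)) := fun t => by positivity
  have hle := image_le_of_deriv_right_lt_deriv_boundary (a := 0) (b := T)
    (fun t ht => (hv t ht.1).continuousAt.continuousWithinAt)
    (fun t ht => (hv t ht.1).hasDerivWithinAt) (h0.trans (hB_pos 0).le) hB
    (fun t ht hvB => by
      have := hv' t ht.1 (hvB ▸ (hB_pos t).le)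
      rw [hvB] at this
      linarith [hB_pos t])
    ⟨hT, le_rfl⟩
  simpa using hle

lemma subsolution_le_supersolution {F u v u' v' : ℝ → ℝ} {L : ℝ}
    (hF : ∀ x y, 0 ≤ y → y ≤ x → F x - F y ≤ L * (x - y)) (h0 : u 0 ≤ v 0)
    (hu : ∀ t, 0 ≤ t → HasDerivAt u (u' t) t) (hv : ∀ t, 0 ≤ t → HasDerivAt v (v' t) t)
    (hu' : ∀ t, 0 ≤ t → u' t ≤ F (u t)) (hv' : ∀ t, 0 ≤ t → F (v t) ≤ v' t)
    (hv_nonneg : ∀ t, 0 ≤ t → 0 ≤ v t) {T : ℝ} (hT : 0 ≤ T) : u T ≤ v T := by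
  refine sub_nonpos.1 (nonpos_of_hasDerivAt_le_mul (v := fun t => u t - v t) L (sub_nonpos.2 h0)
    (fun t ht => (hu t ht).sub (hv t ht)) (fun t ht huv => ?_) hT)
  linarith [hu' t ht, hv' t ht, hF (u t) (v t) (hv_nonneg t ht) (sub_nonneg.1 huv)]

lemma exists_hasDerivAt_of_continuousOn_Ici {w : ℝ → ℝ} (hw : ContinuousOn w (Ici 0)) :
    ∃ K : ℝ → ℝ, K 0 = 0 ∧ ∀ t, 0 ≤ t → HasDerivAt K (w t) t := by
  have hc : Continuous fun s => w (max s 0) :=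
    hw.comp_continuous (continuous_id.max continuous_const) fun s => le_max_right s 0
  refine ⟨fun t => ∫ s in (0 : ℝ)..t, w (max s 0), intervalIntegral.integral_same, fun t ht => ?_⟩
  simpa [max_eq_left ht] using (hc.integral_hasStrictDerivAt 0 t).hasDerivAt

lemma nonneg_of_hasDerivAt_nonneg {K w : ℝ → ℝ} (hK0 : K 0 = 0)
    (hK : ∀ t, 0 ≤ t → HasDerivAt K (w t) t) (hw : ∀ t, 0 ≤ t → 0 ≤ w t) {T : ℝ} (hT : 0 ≤ T) :
    0 ≤ K T := by
  have hmono : MonotoneOn K (Ici 0) := by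
    refine monotoneOn_of_hasDerivWithinAt_nonneg (f' := w) (convex_Ici 0)
      (fun t ht => (hK t ht).continuousAt.continuousWithinAt) (fun t ht => ?_) (fun t ht => ?_)
    · rw [interior_Ici] at ht ⊢
      exact (hK t (le_of_lt ht)).hasDerivWithinAt
    · rw [interior_Ici] at ht
      exact hw t (le_of_lt ht)
  simpa [hK0] using hmono (mem_Ici.2 le_rfl) hT hT

noncomputable def relax (z x : ℝ) : ℝ := z * (1 - exp (-x))

lemma relax_zero (z : ℝ) : relax z 0 = 0 := by simp [relax]

lemma relax_monotone {z : ℝ} (hz : 0 ≤ z) : Monotone (relax z) := fun x y hxy =>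
  mul_le_mul_of_nonneg_left (by linarith [exp_le_exp.2 (neg_le_neg hxy)]) hz

lemma relax_antitone {z : ℝ} (hz : z ≤ 0) : Antitone (relax z) := fun x y hxy =>
  mul_le_mul_of_nonpos_left (by linarith [exp_le_exp.2 (neg_le_neg hxy)]) hz

lemma relax_le {z : ℝ} (hz : 0 ≤ z) (x : ℝ) : relax z x ≤ z :=
  mul_le_of_le_one_right hz (by linarith [exp_pos (-x)])

lemma le_relax {z : ℝ} (hz : z ≤ 0) (x : ℝ) : z ≤ relax z x := by
  unfold relax; nlinarith [exp_pos (-x)]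

lemma eq_relax_of_hasDerivAt {z : ℝ} {θ K w : ℝ → ℝ} (hθ0 : θ 0 = 0) (hK0 : K 0 = 0)
    (hK : ∀ t, 0 ≤ t → HasDerivAt K (w t) t)
    (hθ : ∀ t, 0 ≤ t → HasDerivAt θ (w t * (z - θ t)) t) {T : ℝ} (hT : 0 ≤ T) :
    θ T = relax z (K T) := by
  have hF : ∀ t, 0 ≤ t → HasDerivAt (fun t => (θ t - z) * exp (K t)) 0 t := fun t ht =>
    (((hθ t ht).sub_const z).mul (hK t ht).exp).congr_deriv (by ring)
  have hconst := constant_of_has_deriv_right_zero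
    (fun t ht => (hF t ht.1).continuousAt.continuousWithinAt)
    (fun t ht => (hF t ht.1).hasDerivWithinAt) T ⟨hT, le_rfl⟩
  simp only [hθ0, hK0, exp_zero] at hconst
  rw [relax, exp_neg]
  field_simp
  linarith

lemma abs_relax_sub_relax_le (z : ℝ) {x y : ℝ} (hy : 0 ≤ y) (hyx : y ≤ x) :
    |relax z x - relax z y| ≤ |z| * (x - y) := by
  have hexp : exp (-y) - exp (-x) ≤ x - y := by
    have hsplit : exp (-x) = exp (-y) * exp (-(x - y)) := by rw [← exp_add]; ring_nf
    have hy1 : exp (-y) ≤ 1 := exp_le_one_iff.2 (by linarith)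
    nlinarith [add_one_le_exp (-(x - y)), exp_pos (-y), exp_pos (-(x - y))]
  have hnn : 0 ≤ exp (-y) - exp (-x) := by
    linarith [exp_le_exp.2 (neg_le_neg hyx)]
  rw [show relax z x - relax z y = z * (exp (-y) - exp (-x)) by unfold relax; ring, abs_mul,
    abs_of_nonneg hnn]
  exact mul_le_mul_of_nonneg_left hexp (abs_nonneg z)

lemma sqrt_sq_add_four_mul_sq_le {a : ℝ} (ha : 0 ≤ a) (p : ℝ) :
    √(a ^ 2 + 4 * p ^ 2) ≤ a + 2 * |p| := by
  rw [sqrt_le_left (by positivity)]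
  nlinarith [sq_abs p, abs_nonneg p]

lemma add_two_mul_abs_div_sqrt_two_le (a p : ℝ) :
    (a + 2 * |p|) / √2 ≤ √(a ^ 2 + 4 * p ^ 2) := by
  rw [div_le_iff₀ (by positivity), ← sqrt_mul (by positivity)]
  refine le_sqrt_of_sq_le ?_
  nlinarith [sq_abs p, sq_nonneg (a - 2 * |p|)]

lemma sqrt_sq_add_four_mul_sq_sub_le (a p q : ℝ) :
    √(a ^ 2 + 4 * p ^ 2) - √(a ^ 2 + 4 * q ^ 2) ≤ 2 * |p - q| := by
  have hq : 2 * |q| ≤ √(a ^ 2 + 4 * q ^ 2) :=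
    le_sqrt_of_sq_le (by nlinarith [sq_abs q, sq_nonneg a])
  rw [sub_le_iff_le_add, sqrt_le_left (by positivity)]
  have hcross : q * (p - q) ≤ |q| * |p - q| := abs_mul q (p - q) ▸ le_abs_self _
  nlinarith [sq_sqrt (by positivity : 0 ≤ a ^ 2 + 4 * q ^ 2), sq_abs (p - q),
    mul_le_mul_of_nonneg_left hq (abs_nonneg (p - q))]

/-- comparison between the flow `θ' = √(λ² + 4θ²)(z − θ)` and the
comparison flow `θ̃' = (λ + 2|θ̃|)(z − θ̃)`, both started at `0`. -/
theorem theta_comparison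
    (lam z : ℝ) (hlam : 0 < lam)
    (θ θt : ℝ → ℝ)
    (hθ0 : θ 0 = 0) (hθt0 : θt 0 = 0)
    (hθ : ∀ t : ℝ, 0 ≤ t →
      HasDerivAt θ (Real.sqrt (lam ^ 2 + 4 * (θ t) ^ 2) * (z - θ t)) t)
    (hθt : ∀ t : ℝ, 0 ≤ t →
      HasDerivAt θt ((lam + 2 * |θt t|) * (z - θt t)) t) :
    (0 ≤ z → ∀ t : ℝ, 0 ≤ t →
      0 ≤ θt (t / Real.sqrt 2) ∧ θt (t / Real.sqrt 2) ≤ θ t ∧ θ t ≤ θt t ∧ θt t ≤ z) ∧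
    (z ≤ 0 → ∀ t : ℝ, 0 ≤ t →
      θt (t / Real.sqrt 2) ≤ 0 ∧ θ t ≤ θt (t / Real.sqrt 2) ∧ θt t ≤ θ t ∧ z ≤ θt t) := by
  have hθc : ContinuousOn θ (Ici 0) := fun t ht => (hθ t ht).continuousAt.continuousWithinAt
  have hθtc : ContinuousOn θt (Ici 0) := fun t ht => (hθt t ht).continuousAt.continuousWithinAt
  obtain ⟨K, hK0, hK⟩ := exists_hasDerivAt_of_continuousOn_Ici
    (w := fun t => √(lam ^ 2 + 4 * θ t ^ 2)) (by fun_prop)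
  obtain ⟨Kt, hKt0, hKt⟩ := exists_hasDerivAt_of_continuousOn_Ici
    (w := fun t => lam + 2 * |θt t|) (by fun_prop)
  have hθK : ∀ t, 0 ≤ t → θ t = relax z (K t) := fun t ht =>
    eq_relax_of_hasDerivAt hθ0 hK0 hK hθ ht
  have hθtKt : ∀ t, 0 ≤ t → θt t = relax z (Kt t) := fun t ht =>
    eq_relax_of_hasDerivAt hθt0 hKt0 hKt hθt ht
  have hK_nonneg : ∀ t, 0 ≤ t → 0 ≤ K t := fun t ht =>
    nonneg_of_hasDerivAt_nonneg hK0 hK (fun _ _ => sqrt_nonneg _) ht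
  have hKt_nonneg : ∀ t, 0 ≤ t → 0 ≤ Kt t := fun t ht =>
    nonneg_of_hasDerivAt_nonneg hKt0 hKt (fun _ _ => by positivity) ht
  have hF : ∀ x y, 0 ≤ y → y ≤ x →
      √(lam ^ 2 + 4 * relax z x ^ 2) - √(lam ^ 2 + 4 * relax z y ^ 2) ≤ 2 * |z| * (x - y) :=
    fun x y hy hyx => by
    linarith [sqrt_sq_add_four_mul_sq_sub_le lam (relax z x) (relax z y),
      abs_relax_sub_relax_le z hy hyx]
  have hK_le : ∀ t, 0 ≤ t → K t ≤ Kt t := fun t ht =>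
    subsolution_le_supersolution hF (by rw [hK0, hKt0]) hK hKt
      (fun s hs => by rw [hθK s hs])
      (fun s hs => by rw [hθtKt s hs]; exact sqrt_sq_add_four_mul_sq_le hlam.le _) hKt_nonneg ht
  have hKt_le : ∀ t, 0 ≤ t → Kt (t / √2) ≤ K t := fun t ht =>
    subsolution_le_supersolution hF (by simp [hK0, hKt0])
      (fun s hs => (hKt _ (by positivity)).comp s ((hasDerivAt_id' s).div_const √2)) hK
      (fun s hs => by
        rw [hθtKt _ (by positivity), ← div_eq_mul_one_div]
        exact add_two_mul_abs_div_sqrt_two_le _ _)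
      (fun s hs => by rw [hθK s hs]) hK_nonneg ht
  refine ⟨fun hz t ht => ?_, fun hz t ht => ?_⟩ <;>
    rw [hθK t ht, hθtKt t ht, hθtKt _ (by positivity), ← relax_zero z]
  · exact ⟨relax_monotone hz (hKt_nonneg _ (by positivity)), relax_monotone hz (hKt_le t ht),
      relax_monotone hz (hK_le t ht), relax_le hz _⟩
  · exact ⟨relax_antitone hz (hKt_nonneg _ (by positivity)), relax_antitone hz (hKt_le t ht),
      relax_antitone hz (hK_le t ht), le_relax hz _⟩
end

section
/- The function θ̃(t) = [λ(E(t) − 1) / (2|z| + λ E(t))] · z, where E(t) = exp((2|z| + λ)t), satisfies θ̃(0) = 0 and the ODE θ̃'(t) = (λ + 2|θ̃(t)|)(z − θ̃(t)) for all t ≥ 0. -/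
open Real

/-!
Writing `θ̃(t) = s(t) z` with `s(t) = λ(E(t) − 1) / (2|z| + λE(t))`, the factor `s` is
nonnegative for `t ≥ 0`, so `|θ̃| = s |z|` and the ODE for `θ̃` reduces to the scalar Riccati
equation `s' = (λ + 2|z| s)(1 − s)`, which `s` solves by a direct computation.
-/

/-- The solution of `s' = (lam + b s)(1 − s)`, `s 0 = 0`. -/
noncomputable def riccatiSol (b lam t : ℝ) : ℝ :=
  lam * (exp ((b + lam) * t) - 1) / (b + lam * exp ((b + lam) * t))

namespace riccatiSol

variable {b lam : ℝ}

@[simp]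
theorem apply_zero (b lam : ℝ) : riccatiSol b lam 0 = 0 := by
  simp [riccatiSol]

theorem hasDerivAt {t : ℝ} (h : b + lam * exp ((b + lam) * t) ≠ 0) :
    HasDerivAt (riccatiSol b lam)
      ((lam + b * riccatiSol b lam t) * (1 - riccatiSol b lam t)) t := by
  have hexp : HasDerivAt (fun s => exp ((b + lam) * s)) (exp ((b + lam) * t) * (b + lam)) t := by
    simpa using ((hasDerivAt_id t).const_mul (b + lam)).exp
  have hquot := ((hexp.sub_const 1).const_mul lam).div ((hexp.const_mul lam).const_add b) h
  refine hquot.congr_deriv ?_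
  simp only [riccatiSol]
  field_simp
  ring

theorem nonneg (hb : 0 ≤ b) (hlam : 0 ≤ lam) {t : ℝ} (ht : 0 ≤ t) :
    0 ≤ riccatiSol b lam t := by
  have hE : 1 ≤ exp ((b + lam) * t) := one_le_exp (by positivity)
  unfold riccatiSol
  apply div_nonneg <;> nlinarith

end riccatiSol

/-- the explicit function `θ̃(t) = λ(E(t) − 1)z / (2|z| + λE(t))`, with
`E(t) = exp((2|z| + λ)t)`, satisfies `θ̃(0) = 0` and `θ̃' = (λ + 2|θ̃|)(z − θ̃)` on `[0,∞)`. -/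
theorem theta_tilde_explicit_solution
    (lam z : ℝ) (hlam : 0 < lam)
    (θt : ℝ → ℝ)
    (hθt : ∀ t : ℝ, θt t =
      lam * (Real.exp ((2 * |z| + lam) * t) - 1) * z /
        (2 * |z| + lam * Real.exp ((2 * |z| + lam) * t))) :
    θt 0 = 0 ∧
      ∀ t : ℝ, 0 ≤ t → HasDerivAt θt ((lam + 2 * |θt t|) * (z - θt t)) t := by
  have hθ : θt = fun t => riccatiSol (2 * |z|) lam t * z := by
    ext t
    rw [hθt, riccatiSol, mul_div_right_comm]
  subst hθ
  refine ⟨by simp, fun t ht => ?_⟩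
  have hs := riccatiSol.nonneg (by positivity : 0 ≤ 2 * |z|) hlam.le ht
  have hden : 2 * |z| + lam * exp ((2 * |z| + lam) * t) ≠ 0 := by positivity
  refine ((riccatiSol.hasDerivAt hden).mul_const z).congr_deriv ?_
  rw [abs_mul, abs_of_nonneg hs]
  ring
end

section
/- For the deep gradient flow with D ≥ 1 layers, the conservation identities a(t)² = λ + β(t)² and b(t)² = b₀² + D β(t)² hold for all t ≥ 0; in particular a(t) = (λ + β(t)²)^{1/2} > 0 and b(t) = (b₀² + D β(t)²)^{1/2} > 0 for all t ≥ 0. -/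
open Real Set

/-! The flow conserves `a² - β²` and `b² - D β²`, since `a a' = β β'` and `b b' = D β β'` along it.
Positivity then follows by continuity: `a` and `b` start positive and their squares never vanish. -/

theorem sq_sub_mul_sq_eq_of_hasDerivAt {x y x' y' : ℝ → ℝ} {c : ℝ}
    (hx : ∀ t, 0 ≤ t → HasDerivAt x (x' t) t) (hy : ∀ t, 0 ≤ t → HasDerivAt y (y' t) t)
    (hxy : ∀ t, 0 ≤ t → x t * x' t = c * (y t * y' t)) {t : ℝ} (ht : 0 ≤ t) :
    x t ^ 2 - c * y t ^ 2 = x 0 ^ 2 - c * y 0 ^ 2 := by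
  have hderiv : ∀ s, 0 ≤ s → HasDerivAt (fun u => x u ^ 2 - c * y u ^ 2) 0 s := by
    intro s hs
    refine (((hx s hs).fun_pow 2).fun_sub (((hy s hs).fun_pow 2).const_mul c)).congr_deriv ?_
    push_cast
    linear_combination 2 * hxy s hs
  exact constant_of_has_deriv_right_zero
    (fun s hs => (hderiv s hs.1).continuousAt.continuousWithinAt)
    (fun s hs => (hderiv s hs.1).hasDerivWithinAt) t ⟨ht, le_rfl⟩

theorem IsPreconnected.pos_of_pos_of_ne_zero {X : Type*} [TopologicalSpace X] {S : Set X}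
    (hS : IsPreconnected S) {f : X → ℝ} (hf : ContinuousOn f S) {a t : X} (ha : a ∈ S)
    (hfa : 0 < f a) (hne : ∀ s ∈ S, f s ≠ 0) (ht : t ∈ S) : 0 < f t := by
  by_contra! hle
  obtain ⟨s, hs, hs0⟩ := hS.intermediate_value ht ha hf ⟨hle, hfa.le⟩
  exact hne s hs hs0

/-- conservation identities for the deep gradient flow with `D ≥ 1` layers:
`a(t)² = λ + β(t)²` and `b(t)² = b₀² + D β(t)²`, hence
`a(t) = √(λ + β(t)²) > 0` and `b(t) = √(b₀² + D β(t)²) > 0`. -/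
theorem deep_flow_conservation
    (D : ℕ) (hD : 1 ≤ D) (lam b₀ z : ℝ) (hlam : 0 < lam) (hb₀ : 0 < b₀)
    (a b β : ℝ → ℝ)
    (ha0 : a 0 = Real.sqrt lam) (hb0 : b 0 = b₀) (hβ0 : β 0 = 0)
    (ha : ∀ t : ℝ, 0 ≤ t →
      HasDerivAt a ((b t) ^ D * β t * (z - a t * (b t) ^ D * β t)) t)
    (hb : ∀ t : ℝ, 0 ≤ t →
      HasDerivAt b ((D : ℝ) * a t * (b t) ^ (D - 1) * β t * (z - a t * (b t) ^ D * β t)) t)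
    (hβ : ∀ t : ℝ, 0 ≤ t →
      HasDerivAt β (a t * (b t) ^ D * (z - a t * (b t) ^ D * β t)) t) :
    ∀ t : ℝ, 0 ≤ t →
      (a t) ^ 2 = lam + (β t) ^ 2 ∧ (b t) ^ 2 = b₀ ^ 2 + (D : ℝ) * (β t) ^ 2 ∧
      a t = Real.sqrt (lam + (β t) ^ 2) ∧ 0 < a t ∧
      b t = Real.sqrt (b₀ ^ 2 + (D : ℝ) * (β t) ^ 2) ∧ 0 < b t := by
  intro t ht
  have ha_sq : ∀ s, 0 ≤ s → a s ^ 2 = lam + β s ^ 2 := fun s hs => by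
    have := sq_sub_mul_sq_eq_of_hasDerivAt (c := 1) ha hβ (fun _ _ => by ring) hs
    rw [ha0, hβ0, sq_sqrt hlam.le] at this
    linarith
  have hb_sq : ∀ s, 0 ≤ s → b s ^ 2 = b₀ ^ 2 + D * β s ^ 2 := fun s hs => by
    have := sq_sub_mul_sq_eq_of_hasDerivAt (c := D) hb hβ
      (fun u _ => by rw [← mul_pow_sub_one (by omega : D ≠ 0) (b u)]; ring) hs
    rw [hb0, hβ0] at this
    linarith
  have ha_pos : 0 < a t := isPreconnected_Ici.pos_of_pos_of_ne_zero
    (fun s hs => (ha s hs).continuousAt.continuousWithinAt) self_mem_Ici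
    (by rw [ha0]; positivity)
    (fun s hs => ne_of_apply_ne (· ^ 2) (by rw [ha_sq s hs, zero_pow two_ne_zero]; positivity)) ht
  have hb_pos : 0 < b t := isPreconnected_Ici.pos_of_pos_of_ne_zero
    (fun s hs => (hb s hs).continuousAt.continuousWithinAt) self_mem_Ici
    (by rw [hb0]; positivity)
    (fun s hs => ne_of_apply_ne (· ^ 2) (by rw [hb_sq s hs, zero_pow two_ne_zero]; positivity)) ht
  refine ⟨ha_sq t ht, hb_sq t ht, ?_, ha_pos, ?_, hb_pos⟩
  · rw [← ha_sq t ht, sqrt_sq ha_pos.le]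
  · rw [← hb_sq t ht, sqrt_sq hb_pos.le]
end

section
/- For the deep gradient flow with D ≥ 1 layers and z ≠ 0, define the times T̲₁ = (2^{(D+1)/2} b₀^D |z|)^{−1} and T̲₂ = (2^{(D+1)/2} √D λ^{1/2} b₀^{D−1} |z|)^{−1}. Then for all 0 ≤ t ≤ min(T̲₁, T̲₂): |β(t)| ≤ 2^{(D+1)/2} λ^{1/2} b₀^D |z| t and |θ(t)| ≤ 2^{D+1} λ b₀^{2D} |z| t. -/
/-!
Along the flow θ' = (z - θ) G with G ≥ 0, so the loss (z - θ)² decreases and |z - θ| ≤ |z|;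
moreover a² - β² and b² - D β² are conserved. As long as |β| ≤ min(√λ, b₀/√D) this gives
a² ≤ 2λ and b² ≤ 2b₀², hence |β'| = |a b^D| |z - θ| ≤ 2^{(D+1)/2} λ^{1/2} b₀^D |z|, and the
mean value inequality gives the linear bound on β. The times T̲₁ and T̲₂ are exactly those at
which this linear bound reaches √λ and b₀/√D, so a continuity argument keeps |β| below the
threshold up to min(T̲₁, T̲₂). The bound on θ = (a b^D) β follows.
-/

open Real Set

theorem ContinuousOn.forall_lt_of_forall_le_imp_lt {f : ℝ → ℝ} {a b c : ℝ}
    (hf : ContinuousOn f (Ico a b))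
    (hstep : ∀ u ∈ Ico a b, (∀ s ∈ Ico a u, f s ≤ c) → f u < c) :
    ∀ t ∈ Ico a b, f t < c := by
  by_contra! ⟨t, ht, hct⟩
  have hclosed : IsClosed (Icc a t ∩ f ⁻¹' Ici c) :=
    (hf.mono (Icc_subset_Ico_right ht.2)).preimage_isClosed_of_isClosed isClosed_Icc isClosed_Ici
  obtain ⟨u, ⟨hu, hcu⟩, hleast⟩ :=
    (isCompact_Icc.of_isClosed_subset hclosed inter_subset_left).exists_isLeast
      ⟨t, ⟨ht.1, le_rfl⟩, hct⟩
  refine (hstep u ⟨hu.1, hu.2.trans_lt ht.2⟩ fun s hs => ?_).not_ge hcu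
  by_contra! hcs
  exact hs.2.not_ge (hleast ⟨⟨hs.1, hs.2.le.trans hu.2⟩, hcs.le⟩)

theorem abs_sub_le_of_hasDerivAt_mul_nonneg {θ G : ℝ → ℝ} {z t : ℝ}
    (hθ : ∀ s, 0 ≤ s → HasDerivAt θ ((z - θ s) * G s) s) (hG : ∀ s, 0 ≤ s → 0 ≤ G s)
    (ht : 0 ≤ t) : |z - θ t| ≤ |z - θ 0| := by
  have hloss : ∀ s, 0 ≤ s → HasDerivAt (fun r => (z - θ r) ^ 2) (-(2 * (z - θ s) ^ 2 * G s)) s :=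
    fun s hs => (((hasDerivAt_const s z).fun_sub (hθ s hs)).fun_pow 2).congr_deriv (by ring)
  have hanti : AntitoneOn (fun r => (z - θ r) ^ 2) (Ici 0) := by
    refine antitoneOn_of_hasDerivWithinAt_nonpos (convex_Ici 0)
      (fun s hs => (hloss s hs).continuousAt.continuousWithinAt)
      (fun s hs => (hloss s (interior_subset hs)).hasDerivWithinAt) fun s hs => ?_
    have := hG s (interior_subset hs)
    have := sq_nonneg (z - θ s)
    nlinarith
  exact sq_le_sq.1 (hanti self_mem_Ici ht ht)

theorem eq_apply_zero_of_hasDerivAt_zero {f : ℝ → ℝ} {t : ℝ}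
    (hf : ∀ s, 0 ≤ s → HasDerivAt f 0 s) (ht : 0 ≤ t) : f t = f 0 :=
  constant_of_has_deriv_right_zero (fun s hs => (hf s hs.1).continuousAt.continuousWithinAt)
    (fun s hs => (hf s hs.1).hasDerivWithinAt) t ⟨ht, le_rfl⟩

theorem Real.rpow_div_two_sq {x : ℝ} (hx : 0 ≤ x) (y : ℝ) : (x ^ (y / 2)) ^ 2 = x ^ y := by
  rw [← rpow_natCast, ← rpow_mul hx]
  norm_num

theorem sq_two_rpow_mul_sqrt_mul_pow {lam : ℝ} (hlam : 0 ≤ lam) (D : ℕ) (c : ℝ) :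
    ((2 : ℝ) ^ (((D : ℝ) + 1) / 2) * √lam * c ^ D) ^ 2 = 2 ^ (D + 1) * lam * c ^ (2 * D) := by
  rw [mul_pow, mul_pow, rpow_div_two_sq zero_le_two, sq_sqrt hlam, ← Nat.cast_add_one,
    rpow_natCast, ← pow_mul, mul_comm D]

theorem abs_mul_pow_le_of_sq_le {x y w lam c : ℝ} {D : ℕ} (hlam : 0 ≤ lam) (hc : 0 ≤ c)
    (hx : x ^ 2 = lam + w ^ 2) (hy : y ^ 2 = c ^ 2 + D * w ^ 2)
    (hwlam : w ^ 2 ≤ lam) (hwc : D * w ^ 2 ≤ c ^ 2) :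
    |x * y ^ D| ≤ (2 : ℝ) ^ (((D : ℝ) + 1) / 2) * √lam * c ^ D := by
  refine abs_le_of_sq_le_sq ?_ (by positivity)
  calc (x * y ^ D) ^ 2 = x ^ 2 * (y ^ 2) ^ D := by ring
    _ ≤ (2 * lam) * (2 * c ^ 2) ^ D := by
      rw [hx, hy]
      gcongr <;> linarith
    _ = ((2 : ℝ) ^ (((D : ℝ) + 1) / 2) * √lam * c ^ D) ^ 2 := by
      rw [sq_two_rpow_mul_sqrt_mul_pow hlam]
      ring

structure IsDeepFlow (D : ℕ) (z : ℝ) (a b β : ℝ → ℝ) : Prop where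
  hasDerivAt_a : ∀ t, 0 ≤ t → HasDerivAt a (b t ^ D * β t * (z - a t * b t ^ D * β t)) t
  hasDerivAt_b : ∀ t, 0 ≤ t →
    HasDerivAt b (D * a t * b t ^ (D - 1) * β t * (z - a t * b t ^ D * β t)) t
  hasDerivAt_β : ∀ t, 0 ≤ t → HasDerivAt β (a t * b t ^ D * (z - a t * b t ^ D * β t)) t

namespace IsDeepFlow

variable {D : ℕ} {z lam b₀ t : ℝ} {a b β : ℝ → ℝ}

theorem hasDerivAt_output (h : IsDeepFlow D z a b β) (ht : 0 ≤ t) :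
    HasDerivAt (fun s => a s * b s ^ D * β s) ((z - a t * b t ^ D * β t) *
      ((b t ^ D * β t) ^ 2 + (D * a t * b t ^ (D - 1) * β t) ^ 2 + (a t * b t ^ D) ^ 2)) t :=
  (((h.hasDerivAt_a t ht).fun_mul ((h.hasDerivAt_b t ht).fun_pow D)).fun_mul
    (h.hasDerivAt_β t ht)).congr_deriv (by ring)

theorem abs_sub_output_le (h : IsDeepFlow D z a b β) (ht : 0 ≤ t) :
    |z - a t * b t ^ D * β t| ≤ |z - a 0 * b 0 ^ D * β 0| :=
  abs_sub_le_of_hasDerivAt_mul_nonneg (fun _ hs => h.hasDerivAt_output hs)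
    (fun _ _ => by positivity) ht

theorem sq_a_sub_sq_β (h : IsDeepFlow D z a b β) (ht : 0 ≤ t) :
    a t ^ 2 - β t ^ 2 = a 0 ^ 2 - β 0 ^ 2 :=
  eq_apply_zero_of_hasDerivAt_zero (fun s hs =>
    (((h.hasDerivAt_a s hs).fun_pow 2).fun_sub ((h.hasDerivAt_β s hs).fun_pow 2)).congr_deriv
      (by ring)) ht

theorem sq_b_sub_sq_β (h : IsDeepFlow D z a b β) (ht : 0 ≤ t) :
    b t ^ 2 - D * β t ^ 2 = b 0 ^ 2 - D * β 0 ^ 2 := by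
  refine eq_apply_zero_of_hasDerivAt_zero (fun s hs =>
    (((h.hasDerivAt_b s hs).fun_pow 2).fun_sub
      (((h.hasDerivAt_β s hs).fun_pow 2).const_mul (D : ℝ))).congr_deriv ?_) ht
  rcases D with _ | D
  · simp
  · simp only [Nat.add_sub_cancel, pow_succ]
    push_cast
    ring

theorem sq_a_eq (h : IsDeepFlow D z a b β) (hlam : 0 ≤ lam) (ha0 : a 0 = √lam)
    (hβ0 : β 0 = 0) (ht : 0 ≤ t) : a t ^ 2 = lam + β t ^ 2 := by
  have := h.sq_a_sub_sq_β ht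
  rw [ha0, hβ0, sq_sqrt hlam] at this
  linarith

theorem sq_b_eq (h : IsDeepFlow D z a b β) (hb0 : b 0 = b₀) (hβ0 : β 0 = 0) (ht : 0 ≤ t) :
    b t ^ 2 = b₀ ^ 2 + D * β t ^ 2 := by
  have := h.sq_b_sub_sq_β ht
  rw [hb0, hβ0] at this
  linarith

theorem abs_a_mul_pow_le (h : IsDeepFlow D z a b β) (hD : 0 < D) (hlam : 0 ≤ lam)
    (hb₀ : 0 ≤ b₀) (ha0 : a 0 = √lam) (hb0 : b 0 = b₀) (hβ0 : β 0 = 0) (ht : 0 ≤ t)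
    (hβt : |β t| ≤ min √lam (b₀ / √D)) :
    |a t * b t ^ D| ≤ (2 : ℝ) ^ (((D : ℝ) + 1) / 2) * √lam * b₀ ^ D := by
  refine abs_mul_pow_le_of_sq_le hlam hb₀ (h.sq_a_eq hlam ha0 hβ0 ht) (h.sq_b_eq hb0 hβ0 ht)
    ((Real.sq_le hlam).2 (abs_le.1 (hβt.trans (min_le_left _ _)))) ?_
  have := pow_le_pow_left₀ (abs_nonneg _) (hβt.trans (min_le_right _ _)) 2
  rw [sq_abs, div_pow, sq_sqrt D.cast_nonneg, le_div_iff₀ (by positivity)] at this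
  linarith

theorem abs_β_le (h : IsDeepFlow D z a b β) (hD : 0 < D) (hlam : 0 ≤ lam)
    (hb₀ : 0 ≤ b₀) (ha0 : a 0 = √lam) (hb0 : b 0 = b₀) (hβ0 : β 0 = 0) (ht : 0 ≤ t)
    (hβs : ∀ s ∈ Ico 0 t, |β s| ≤ min √lam (b₀ / √D)) :
    |β t| ≤ (2 : ℝ) ^ (((D : ℝ) + 1) / 2) * √lam * b₀ ^ D * |z| * t := by
  have := norm_image_sub_le_of_norm_deriv_right_le_segment
    (C := (2 : ℝ) ^ (((D : ℝ) + 1) / 2) * √lam * b₀ ^ D * |z|)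
    (fun s hs => (h.hasDerivAt_β s hs.1).continuousAt.continuousWithinAt)
    (fun s hs => (h.hasDerivAt_β s hs.1).hasDerivWithinAt) (fun s hs => ?_) t ⟨ht, le_rfl⟩
  · simpa [hβ0] using this
  rw [norm_mul, Real.norm_eq_abs, Real.norm_eq_abs]
  have hloss : |z - a s * b s ^ D * β s| ≤ |z| := by
    simpa [hβ0] using h.abs_sub_output_le hs.1
  exact mul_le_mul (h.abs_a_mul_pow_le hD hlam hb₀ ha0 hb0 hβ0 hs.1 (hβs s hs)) hloss
    (abs_nonneg _) (by positivity)

end IsDeepFlow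

theorem rpow_mul_sqrt_mul_pow_mul_min_inv_eq {D : ℕ} {lam b₀ z : ℝ} (hD : 0 < D)
    (hlam : 0 < lam) (hb₀ : 0 < b₀) (hz : z ≠ 0) :
    (2 : ℝ) ^ (((D : ℝ) + 1) / 2) * √lam * b₀ ^ D * |z| *
        min (((2 : ℝ) ^ (((D : ℝ) + 1) / 2) * b₀ ^ D * |z|)⁻¹)
          (((2 : ℝ) ^ (((D : ℝ) + 1) / 2) * √(D : ℝ) * √lam * b₀ ^ (D - 1) * |z|)⁻¹) =
      min √lam (b₀ / √D) := by
  obtain ⟨d, rfl⟩ := Nat.exists_eq_add_of_lt hD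
  have : 0 < |z| := abs_pos.2 hz
  rw [mul_min_of_nonneg _ _ (by positivity)]
  congr 1
  · field_simp
  · simp only [zero_add, Nat.add_sub_cancel]
    field_simp
    ring

/-- initial (linear-growth) bounds for the deep gradient flow with `D ≥ 1`
layers and `z ≠ 0`, valid up to time `min(T̲₁, T̲₂)` where
`T̲₁ = (2^{(D+1)/2} b₀^D |z|)⁻¹` and `T̲₂ = (2^{(D+1)/2} √D λ^{1/2} b₀^{D−1} |z|)⁻¹`. -/
theorem deep_flow_noise_linear_bound
    (D : ℕ) (hD : 1 ≤ D) (lam b₀ z : ℝ) (hlam : 0 < lam) (hb₀ : 0 < b₀) (hz : z ≠ 0)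
    (a b β : ℝ → ℝ)
    (ha0 : a 0 = Real.sqrt lam) (hb0 : b 0 = b₀) (hβ0 : β 0 = 0)
    (ha : ∀ t : ℝ, 0 ≤ t →
      HasDerivAt a ((b t) ^ D * β t * (z - a t * (b t) ^ D * β t)) t)
    (hb : ∀ t : ℝ, 0 ≤ t →
      HasDerivAt b ((D : ℝ) * a t * (b t) ^ (D - 1) * β t * (z - a t * (b t) ^ D * β t)) t)
    (hβ : ∀ t : ℝ, 0 ≤ t →
      HasDerivAt β (a t * (b t) ^ D * (z - a t * (b t) ^ D * β t)) t) :
    ∀ t : ℝ, 0 ≤ t →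
      t ≤ min (((2 : ℝ) ^ (((D : ℝ) + 1) / 2) * b₀ ^ D * |z|)⁻¹)
              (((2 : ℝ) ^ (((D : ℝ) + 1) / 2) * Real.sqrt (D : ℝ) * Real.sqrt lam *
                  b₀ ^ (D - 1) * |z|)⁻¹) →
      |β t| ≤ (2 : ℝ) ^ (((D : ℝ) + 1) / 2) * Real.sqrt lam * b₀ ^ D * |z| * t ∧
      |a t * (b t) ^ D * β t| ≤ 2 ^ (D + 1) * lam * b₀ ^ (2 * D) * |z| * t := by
  intro t ht htT
  have hflow : IsDeepFlow D z a b β := ⟨ha, hb, hβ⟩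
  have hrate : 0 < (2 : ℝ) ^ (((D : ℝ) + 1) / 2) * √lam * b₀ ^ D * |z| := by
    have := abs_pos.2 hz
    positivity
  have hT := rpow_mul_sqrt_mul_pow_mul_min_inv_eq hD hlam hb₀ hz
  have hsmall := ContinuousOn.forall_lt_of_forall_le_imp_lt
    (fun s hs => (hβ s hs.1).continuousAt.abs.continuousWithinAt) fun u hu hβu =>
      (hflow.abs_β_le hD hlam.le hb₀.le ha0 hb0 hβ0 hu.1 hβu).trans_lt
        (hT ▸ mul_lt_mul_of_pos_left hu.2 hrate)
  have hβt := hflow.abs_β_le hD hlam.le hb₀.le ha0 hb0 hβ0 ht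
    fun s hs => (hsmall s ⟨hs.1, hs.2.trans_le htT⟩).le
  refine ⟨hβt, ?_⟩
  have hab := hflow.abs_a_mul_pow_le hD hlam.le hb₀.le ha0 hb0 hβ0 ht
    (hβt.trans (hT ▸ mul_le_mul_of_nonneg_left htT hrate.le))
  calc |a t * b t ^ D * β t| = |a t * b t ^ D| * |β t| := abs_mul _ _
    _ ≤ (2 : ℝ) ^ (((D : ℝ) + 1) / 2) * √lam * b₀ ^ D *
        ((2 : ℝ) ^ (((D : ℝ) + 1) / 2) * √lam * b₀ ^ D * |z| * t) :=
      mul_le_mul hab hβt (abs_nonneg _) (by positivity)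
    _ = 2 ^ (D + 1) * lam * b₀ ^ (2 * D) * |z| * t := by
      rw [← sq_two_rpow_mul_sqrt_mul_pow hlam.le]
      ring
end

section
/- For the deep gradient flow with D ≥ 1 layers and z ≠ 0, assume additionally λ^{1/2} ≤ b₀/√D. With T̲₁ = (2^{(D+1)/2} b₀^D |z|)^{−1} and T̲^{(1,2)} = (1 + ln(b₀/(√D λ^{1/2}))) · T̲₁, for all 0 ≤ t ≤ T̲^{(1,2)}: |β(t)| ≤ λ^{1/2} exp( 2^{(D+1)/2} b₀^D |z| (t − T̲₁)⁺ ) and |θ(t)| ≤ 2^{(D+1)/2} λ b₀^D exp( 2^{(D+3)/2} b₀^D |z| (t − T̲₁)⁺ ), where x⁺ = max(x, 0). -/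
/-!
Along the flow `a² - β²` and `b² - D β²` are conserved, and the residual `|z - θ|` never
increases. Hence `u = a + β` solves `u' = b^D (z - θ) u`, and `a² - β² = λ` gives
`β = √λ sinh (log (u / √λ))`. As long as `|β| ≤ b₀/√D` we have `b² ≤ 2 b₀²`, so `log u`
moves at speed at most `κ = 2^{D/2} b₀^D |z|` and
`|β(t)| ≤ √λ sinh (κ t) < √λ exp ((√2 κ t - 1)⁺)`. Up to time `T̲^{(1,2)}` the last bound is
at most `b₀/√D`, which closes the bootstrap. The bound on `θ = a b^D β` then follows from
`a² = λ + β²` and `b² ≤ 2 b₀²`.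
-/

open Real Set

theorem forall_lt_of_bootstrap {g : ℝ → ℝ} {c t₀ t : ℝ} (hg : ContinuousOn g (Icc t₀ t))
    (h₀ : g t₀ < c) (hstep : ∀ τ ∈ Icc t₀ t, (∀ s ∈ Icc t₀ τ, g s ≤ c) → g τ < c) :
    ∀ τ ∈ Icc t₀ t, g τ < c := by
  by_contra! hbad
  have hclosed : IsClosed (Icc t₀ t ∩ g ⁻¹' Ici c) :=
    hg.preimage_isClosed_of_isClosed isClosed_Icc isClosed_Ici
  obtain ⟨m, ⟨hm, hcm⟩, hleast⟩ := (isCompact_Icc.of_isClosed_subset hclosed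
    inter_subset_left).exists_isLeast (by simpa [Set.Nonempty] using hbad)
  have hfirst : ∀ s ∈ Icc t₀ m, c ≤ g s → s = m := fun s hs hcs =>
    le_antisymm hs.2 (hleast ⟨⟨hs.1, hs.2.trans hm.2⟩, hcs⟩)
  -- the first time `g` reaches `c` is `m` itself, by the intermediate value theorem
  obtain ⟨s, hs, hgs⟩ := intermediate_value_Icc hm.1 (hg.mono (Icc_subset_Icc_right hm.2))
    ⟨h₀.le, hcm⟩
  have hgm : g m = c := hfirst s hs hgs.ge ▸ hgs
  refine (hstep m hm fun s hs => ?_).ne hgm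
  by_contra! hlt
  exact (hfirst s hs hlt.le ▸ hlt).ne' hgm

theorem abs_log_sub_log_le_of_hasDerivAt {u p : ℝ → ℝ} {K τ : ℝ} (hτ : 0 ≤ τ)
    (hu : ∀ s ∈ Icc 0 τ, HasDerivAt u (p s * u s) s) (hpos : ∀ s ∈ Icc 0 τ, 0 < u s)
    (hp : ∀ s ∈ Icc 0 τ, |p s| ≤ K) : |log (u τ) - log (u 0)| ≤ K * τ := by
  have hlog : ∀ s ∈ Icc 0 τ, HasDerivWithinAt (fun r => log (u r)) (p s) (Icc 0 τ) s :=
    fun s hs => (((hu s hs).log (hpos s hs).ne').congr_deriv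
      (mul_div_cancel_right₀ _ (hpos s hs).ne')).hasDerivWithinAt
  simpa [abs_of_nonneg hτ] using (convex_Icc 0 τ).norm_image_sub_le_of_norm_hasDerivWithin_le
    hlog hp (left_mem_Icc.2 hτ) (right_mem_Icc.2 hτ)

theorem Real.sinh_lt_exp_max_sqrt_two_mul_sub_one {y : ℝ} (hy : 0 ≤ y) :
    sinh y < exp (max (√2 * y - 1) 0) := by
  have hsqrt2 : (1.4142 : ℝ) < √2 := by
    rw [lt_sqrt (by norm_num)]; norm_num
  rcases le_or_gt y (3 / 4) with hy' | hy'
  · -- `exp (1/4) ≤ 4/3` gives `2 sinh (3/4) ≤ (4/3)³ - (3/4)³ < 2`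
    have he : exp (1 / 4) ≤ 4 / 3 := by
      convert exp_bound_div_one_sub_of_interval (x := 1 / 4) (by norm_num) (by norm_num) using 1
      norm_num
    have he3 : exp (3 / 4) = exp (1 / 4) ^ 3 := by rw [← exp_nat_mul]; norm_num
    have hsinh : sinh (3 / 4) < 1 := by
      rw [sinh_eq, exp_neg, he3]
      have h1 : 1 ≤ exp (1 / 4 : ℝ) := one_le_exp (by norm_num)
      have h3 : 1 ≤ exp (1 / 4 : ℝ) ^ 3 := one_le_pow₀ h1
      rw [div_lt_one two_pos, sub_lt_iff_lt_add, ← sub_lt_iff_lt_add', inv_eq_one_div,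
        lt_div_iff₀ (by positivity)]
      nlinarith [pow_le_pow_left₀ (by positivity) he 3]
    calc sinh y ≤ sinh (3 / 4) := sinh_le_sinh.2 hy'
      _ < 1 := hsinh
      _ ≤ exp (max (√2 * y - 1) 0) := one_le_exp (le_max_right _ _)
  · -- `y - log 2 < √2 y - 1` because `(√2 - 1) · 3/4 > 1 - log 2`
    have hlog2 := log_two_gt_d9
    calc sinh y < exp y / 2 := by rw [sinh_eq]; gcongr; linarith [exp_pos (-y)]
      _ = exp (y - log 2) := by rw [exp_sub, exp_log two_pos]
      _ < exp (√2 * y - 1) := exp_lt_exp.2 (by nlinarith)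
      _ ≤ exp (max (√2 * y - 1) 0) := exp_le_exp.2 (le_max_left _ _)

theorem abs_le_sqrt_two_mul_of_sq_le {x M : ℝ} (hM : 0 ≤ M) (h : x ^ 2 ≤ 2 * M ^ 2) :
    |x| ≤ √2 * M := by
  simpa [sqrt_mul zero_le_two, sqrt_sq hM] using abs_le_sqrt h

theorem eq_mul_sinh_log_sub_log {a β ε : ℝ} (hε : 0 < ε) (hu : 0 < a + β)
    (h : a ^ 2 - β ^ 2 = ε ^ 2) : β = ε * sinh (log (a + β) - log ε) := by
  rw [sinh_eq, exp_neg, exp_sub, exp_log hu, exp_log hε]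
  field_simp
  linear_combination (-1 : ℝ) * h

theorem exp_max_sub_one_le {x L : ℝ} (hL : 1 ≤ L) (hx : x ≤ 1 + log L) :
    exp (max (x - 1) 0) ≤ L := by
  rw [← exp_log (zero_lt_one.trans_le hL)]
  exact exp_le_exp.2 (max_le (by linarith) (log_nonneg hL))

theorem two_rpow_natCast_div_two (n : ℕ) : (2 : ℝ) ^ ((n : ℝ) / 2) = √2 ^ n := by
  rw [sqrt_eq_rpow, ← rpow_natCast, ← rpow_mul zero_le_two]
  ring_nf

theorem eq_of_hasDerivAt_zero_of_nonneg {f : ℝ → ℝ} (hf : ∀ t, 0 ≤ t → HasDerivAt f 0 t)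
    {t : ℝ} (ht : 0 ≤ t) : f t = f 0 :=
  constant_of_has_deriv_right_zero (fun x hx => (hf x hx.1).continuousAt.continuousWithinAt)
    (fun x hx => (hf x hx.1).hasDerivWithinAt) t ⟨ht, le_rfl⟩

/-- The gradient flow on `[0, ∞)` of the loss `(z - a b^D β)² / 2`. -/
structure IsDeepGradientFlow (D : ℕ) (z : ℝ) (a b β : ℝ → ℝ) : Prop where
  hasDerivAt_a : ∀ t, 0 ≤ t → HasDerivAt a (b t ^ D * β t * (z - a t * b t ^ D * β t)) t
  hasDerivAt_b : ∀ t, 0 ≤ t →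
    HasDerivAt b (D * a t * b t ^ (D - 1) * β t * (z - a t * b t ^ D * β t)) t
  hasDerivAt_β : ∀ t, 0 ≤ t → HasDerivAt β (a t * b t ^ D * (z - a t * b t ^ D * β t)) t

namespace IsDeepGradientFlow

variable {D : ℕ} {z : ℝ} {a b β : ℝ → ℝ} {t : ℝ}

theorem sq_sub_sq_eq (hf : IsDeepGradientFlow D z a b β) (ht : 0 ≤ t) :
    a t ^ 2 - β t ^ 2 = a 0 ^ 2 - β 0 ^ 2 :=
  eq_of_hasDerivAt_zero_of_nonneg (f := fun s => a s ^ 2 - β s ^ 2) (fun s hs =>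
    (((hf.hasDerivAt_a s hs).fun_pow 2).fun_sub ((hf.hasDerivAt_β s hs).fun_pow 2)).congr_deriv
      (by ring)) ht

theorem sq_sub_mul_sq_eq (hf : IsDeepGradientFlow D z a b β) (ht : 0 ≤ t) :
    b t ^ 2 - D * β t ^ 2 = b 0 ^ 2 - D * β 0 ^ 2 := by
  refine eq_of_hasDerivAt_zero_of_nonneg (f := fun s => b s ^ 2 - D * β s ^ 2) (fun s hs =>
    HasDerivAt.congr_deriv (((hf.hasDerivAt_b s hs).fun_pow 2).fun_sub
      (((hf.hasDerivAt_β s hs).fun_pow 2).const_mul _)) ?_) ht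
  cases D with
  | zero => simp
  | succ n =>
    rw [Nat.add_sub_cancel]
    push_cast
    ring

theorem antitoneOn_sq_residual (hf : IsDeepGradientFlow D z a b β) :
    AntitoneOn (fun t => (z - a t * b t ^ D * β t) ^ 2) (Ici 0) := by
  have hderiv : ∀ t, 0 ≤ t → HasDerivAt (fun t => (z - a t * b t ^ D * β t) ^ 2)
      (-2 * (z - a t * b t ^ D * β t) ^ 2 * ((b t ^ D * β t) ^ 2 +
        (D * a t * b t ^ (D - 1) * β t) ^ 2 + (a t * b t ^ D) ^ 2)) t := by
    intro t ht
    refine (((hasDerivAt_const t z).fun_sub (((hf.hasDerivAt_a t ht).fun_mul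
      ((hf.hasDerivAt_b t ht).fun_pow D)).fun_mul (hf.hasDerivAt_β t ht))).fun_pow 2).congr_deriv
      ?_
    push_cast
    ring
  refine antitoneOn_of_hasDerivWithinAt_nonpos (convex_Ici 0)
    (fun t ht => (hderiv t ht).continuousAt.continuousWithinAt)
    (fun t ht => (hderiv t (interior_subset ht)).hasDerivWithinAt) fun t _ => ?_
  have : 0 ≤ (z - a t * b t ^ D * β t) ^ 2 * ((b t ^ D * β t) ^ 2 +
      (D * a t * b t ^ (D - 1) * β t) ^ 2 + (a t * b t ^ D) ^ 2) := by positivity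
  linarith

theorem abs_residual_le (hf : IsDeepGradientFlow D z a b β) (ht : 0 ≤ t) :
    |z - a t * b t ^ D * β t| ≤ |z - a 0 * b 0 ^ D * β 0| :=
  sq_le_sq.1 (hf.antitoneOn_sq_residual self_mem_Ici ht ht)

theorem hasDerivAt_add (hf : IsDeepGradientFlow D z a b β) (ht : 0 ≤ t) :
    HasDerivAt (fun s => a s + β s) (b t ^ D * (z - a t * b t ^ D * β t) * (a t + β t)) t :=
  ((hf.hasDerivAt_a t ht).fun_add (hf.hasDerivAt_β t ht)).congr_deriv (by ring)

theorem a_add_β_pos (hf : IsDeepGradientFlow D z a b β) (h₀ : 0 < a 0 + β 0)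
    (hinv : 0 < a 0 ^ 2 - β 0 ^ 2) (ht : 0 ≤ t) : 0 < a t + β t := by
  have hne : ∀ s, 0 ≤ s → a s + β s ≠ 0 := fun s hs h => by
    have := hf.sq_sub_sq_eq hs
    rw [sq_sub_sq, h, zero_mul] at this
    linarith
  -- a continuous function that never vanishes keeps the sign it has at `0`
  refine neg_neg_iff_pos.1 <| forall_lt_of_bootstrap (g := fun s => -(a s + β s)) (c := 0)
    (fun s hs => (hf.hasDerivAt_add hs.1).continuousAt.neg.continuousWithinAt)
    (neg_neg_iff_pos.2 h₀)
    (fun τ hτ hle => (hle τ ⟨hτ.1, le_rfl⟩).lt_of_ne (neg_ne_zero.2 (hne τ hτ.1)))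
    t ⟨ht, le_rfl⟩

theorem abs_β_le_mul_sinh (hf : IsDeepGradientFlow D z a b β) {ε K τ : ℝ} (hε : 0 < ε)
    (ha0 : a 0 = ε) (hβ0 : β 0 = 0) (hτ : 0 ≤ τ)
    (hK : ∀ s ∈ Icc 0 τ, |b s ^ D * (z - a s * b s ^ D * β s)| ≤ K) :
    |β τ| ≤ ε * sinh (K * τ) := by
  have hinv : ∀ {s}, 0 ≤ s → a s ^ 2 - β s ^ 2 = ε ^ 2 := fun hs => by
    rw [hf.sq_sub_sq_eq hs, ha0, hβ0]; ring
  have hpos : ∀ {s}, 0 ≤ s → 0 < a s + β s := fun hs =>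
    hf.a_add_β_pos (by simpa [ha0, hβ0]) (by rw [hinv le_rfl]; positivity) hs
  have hlog := abs_log_sub_log_le_of_hasDerivAt hτ (fun s hs => hf.hasDerivAt_add hs.1)
    (fun s hs => hpos hs.1) hK
  rw [ha0, hβ0, add_zero] at hlog
  rw [eq_mul_sinh_log_sub_log hε (hpos hτ) (hinv hτ), abs_mul, abs_of_pos hε, abs_sinh]
  exact mul_le_mul_of_nonneg_left (sinh_le_sinh.2 hlog) hε.le

theorem abs_b_le (hf : IsDeepGradientFlow D z a b β) {b₀ : ℝ} (hD : 0 < D) (hb₀ : 0 ≤ b₀)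
    (hb0 : b 0 = b₀) (hβ0 : β 0 = 0) (ht : 0 ≤ t) (hβ : |β t| ≤ b₀ / √D) :
    |b t| ≤ √2 * b₀ := by
  refine abs_le_sqrt_two_mul_of_sq_le hb₀ ?_
  have hcons := hf.sq_sub_mul_sq_eq ht
  rw [hb0, hβ0] at hcons
  have hβ2 := pow_le_pow_left₀ (abs_nonneg _) hβ 2
  rw [sq_abs, div_pow, sq_sqrt (Nat.cast_nonneg D), le_div_iff₀ (by positivity)] at hβ2
  linarith

theorem abs_β_lt_mul_exp (hf : IsDeepGradientFlow D z a b β) {ε b₀ τ : ℝ} (hD : 0 < D)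
    (hε : 0 < ε) (hb₀ : 0 ≤ b₀) (ha0 : a 0 = ε) (hb0 : b 0 = b₀) (hβ0 : β 0 = 0)
    (hτ : 0 ≤ τ) (hβ : ∀ s ∈ Icc 0 τ, |β s| ≤ b₀ / √D) :
    |β τ| < ε * exp (max (√2 * ((√2 * b₀) ^ D * |z|) * τ - 1) 0) := by
  have hK : ∀ s ∈ Icc 0 τ,
      |b s ^ D * (z - a s * b s ^ D * β s)| ≤ (√2 * b₀) ^ D * |z| := by
    intro s hs
    have hres := hf.abs_residual_le hs.1
    rw [hβ0, mul_zero, sub_zero] at hres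
    rw [abs_mul, abs_pow]
    exact mul_le_mul (pow_le_pow_left₀ (abs_nonneg _)
      (hf.abs_b_le hD hb₀ hb0 hβ0 hs.1 (hβ s hs)) D) hres (abs_nonneg _) (by positivity)
  calc |β τ| ≤ ε * sinh ((√2 * b₀) ^ D * |z| * τ) :=
        hf.abs_β_le_mul_sinh hε ha0 hβ0 hτ hK
    _ < ε * exp (max (√2 * ((√2 * b₀) ^ D * |z|) * τ - 1) 0) := by
      rw [mul_assoc √2]
      exact mul_lt_mul_of_pos_left (sinh_lt_exp_max_sqrt_two_mul_sub_one (by positivity)) hε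

theorem abs_β_lt_div_sqrt (hf : IsDeepGradientFlow D z a b β) {ε b₀ : ℝ} (hD : 0 < D)
    (hε : 0 < ε) (hb₀ : 0 ≤ b₀) (ha0 : a 0 = ε) (hb0 : b 0 = b₀) (hβ0 : β 0 = 0)
    (hsmall : ε ≤ b₀ / √D)
    (hT : √2 * ((√2 * b₀) ^ D * |z|) * t ≤ 1 + log (b₀ / (√D * ε))) :
    ∀ τ ∈ Icc 0 t, |β τ| < b₀ / √D := by
  have hD' : 0 < √(D : ℝ) := sqrt_pos.2 (Nat.cast_pos.2 hD)
  have hL : 1 ≤ b₀ / (√D * ε) := by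
    rwa [one_le_div (by positivity), ← le_div_iff₀' hD']
  refine forall_lt_of_bootstrap
    (fun s hs => (hf.hasDerivAt_β s hs.1).continuousAt.abs.continuousWithinAt)
    (by rw [hβ0, abs_zero]; exact hε.trans_le hsmall) fun τ hτ hle => ?_
  calc |β τ| < ε * exp (max (√2 * ((√2 * b₀) ^ D * |z|) * τ - 1) 0) :=
        hf.abs_β_lt_mul_exp hD hε hb₀ ha0 hb0 hβ0 hτ.1 hle
    _ ≤ ε * (b₀ / (√D * ε)) := by
        gcongr
        exact exp_max_sub_one_le hL ((mul_le_mul_of_nonneg_left hτ.2 (by positivity)).trans hT)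
    _ = b₀ / √D := by field_simp

theorem abs_a_mul_b_pow_mul_β_le (hf : IsDeepGradientFlow D z a b β) {ε B E : ℝ} (hε : 0 ≤ ε)
    (ha0 : a 0 = ε) (hβ0 : β 0 = 0) (ht : 0 ≤ t) (hb : |b t| ≤ B) (hβ : |β t| ≤ ε * E)
    (hE : 1 ≤ E) :
    |a t * b t ^ D * β t| ≤ √2 * B ^ D * ε ^ 2 * E ^ 2 := by
  have hεE : ε ≤ ε * E := le_mul_of_one_le_right hε hE
  have ha : |a t| ≤ √2 * (ε * E) := by
    refine abs_le_sqrt_two_mul_of_sq_le (by positivity) ?_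
    have hcons := hf.sq_sub_sq_eq ht
    rw [ha0, hβ0] at hcons
    nlinarith [pow_le_pow_left₀ (abs_nonneg _) hβ 2, sq_abs (β t)]
  rw [abs_mul, abs_mul, abs_pow]
  calc |a t| * |b t| ^ D * |β t| ≤ √2 * (ε * E) * B ^ D * (ε * E) := by
        have hB : 0 ≤ B := (abs_nonneg _).trans hb
        gcongr
    _ = √2 * B ^ D * ε ^ 2 * E ^ 2 := by ring

end IsDeepGradientFlow

/-- exponential-growth bounds for the deep gradient flow with `D ≥ 1`
layers, `z ≠ 0` and `λ^{1/2} ≤ b₀/√D`, valid up to time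
`T̲^{(1,2)} = (1 + ln(b₀/(√D λ^{1/2}))) T̲₁` where `T̲₁ = (2^{(D+1)/2} b₀^D |z|)⁻¹`. -/
theorem deep_flow_noise_exp_bound
    (D : ℕ) (hD : 1 ≤ D) (lam b₀ z : ℝ) (hlam : 0 < lam) (hb₀ : 0 < b₀) (hz : z ≠ 0)
    (hsmall : Real.sqrt lam ≤ b₀ / Real.sqrt (D : ℝ))
    (a b β : ℝ → ℝ)
    (ha0 : a 0 = Real.sqrt lam) (hb0 : b 0 = b₀) (hβ0 : β 0 = 0)
    (ha : ∀ t : ℝ, 0 ≤ t →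
      HasDerivAt a ((b t) ^ D * β t * (z - a t * (b t) ^ D * β t)) t)
    (hb : ∀ t : ℝ, 0 ≤ t →
      HasDerivAt b ((D : ℝ) * a t * (b t) ^ (D - 1) * β t * (z - a t * (b t) ^ D * β t)) t)
    (hβ : ∀ t : ℝ, 0 ≤ t →
      HasDerivAt β (a t * (b t) ^ D * (z - a t * (b t) ^ D * β t)) t) :
    ∀ t : ℝ, 0 ≤ t →
      t ≤ (1 + Real.log (b₀ / (Real.sqrt (D : ℝ) * Real.sqrt lam))) *
            ((2 : ℝ) ^ (((D : ℝ) + 1) / 2) * b₀ ^ D * |z|)⁻¹ →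
      |β t| ≤ Real.sqrt lam *
          Real.exp ((2 : ℝ) ^ (((D : ℝ) + 1) / 2) * b₀ ^ D * |z| *
            max (t - ((2 : ℝ) ^ (((D : ℝ) + 1) / 2) * b₀ ^ D * |z|)⁻¹) 0) ∧
      |a t * (b t) ^ D * β t| ≤ (2 : ℝ) ^ (((D : ℝ) + 1) / 2) * lam * b₀ ^ D *
          Real.exp ((2 : ℝ) ^ (((D : ℝ) + 3) / 2) * b₀ ^ D * |z| *
            max (t - ((2 : ℝ) ^ (((D : ℝ) + 1) / 2) * b₀ ^ D * |z|)⁻¹) 0) := by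
  intro t ht hT
  have hf : IsDeepGradientFlow D z a b β := ⟨ha, hb, hβ⟩
  have hε : 0 < √lam := sqrt_pos.2 hlam
  have h₁ : (2 : ℝ) ^ (((D : ℝ) + 1) / 2) = √2 ^ (D + 1) := by
    exact_mod_cast two_rpow_natCast_div_two (D + 1)
  set c := √2 * ((√2 * b₀) ^ D * |z|)
  have hc : 0 < c := by have := abs_pos.2 hz; positivity
  have hrate : (2 : ℝ) ^ (((D : ℝ) + 1) / 2) * b₀ ^ D * |z| = c := by rw [h₁]; ring
  have hrate₂ : (2 : ℝ) ^ (((D : ℝ) + 3) / 2) * b₀ ^ D * |z| = 2 * c := by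
    rw [show ((D : ℝ) + 3) / 2 = 1 + ((D : ℝ) + 1) / 2 by ring, rpow_add two_pos, rpow_one,
      h₁]
    ring
  have hmax : c * max (t - c⁻¹) 0 = max (c * t - 1) 0 := by
    rw [mul_max_of_nonneg _ _ hc.le, mul_zero, mul_sub, mul_inv_cancel₀ hc.ne']
  rw [hrate, le_mul_inv_iff₀ hc, mul_comm] at hT
  have hβsmall := hf.abs_β_lt_div_sqrt hD hε hb₀.le ha0 hb0 hβ0 hsmall hT
  have hβt := hf.abs_β_lt_mul_exp hD hε hb₀.le ha0 hb0 hβ0 ht fun s hs => (hβsmall s hs).le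
  rw [hrate, hrate₂, mul_assoc 2, hmax]
  refine ⟨hβt.le, ?_⟩
  convert hf.abs_a_mul_b_pow_mul_β_le hε.le ha0 hβ0 ht
    (hf.abs_b_le hD hb₀.le hb0 hβ0 ht (hβsmall t ⟨ht, le_rfl⟩).le) hβt.le
    (one_le_exp (le_max_right _ _)) using 1
  rw [sq_sqrt hlam.le, ← exp_nat_mul, h₁]
  push_cast
  ring
end

section
/- For the deep gradient flow with D ≥ 1 layers and z > 0, let T^sig = inf{ t ≥ 0 : θ(t) ≥ z/2 }. Then: (i) if λ^{1/2} ≤ b₀/√D, then T^sig ≤ 2 (b₀^D z)^{−1} [ 1 + ( ln( (D^{−D/2} z/2)^{1/(D+2)} / λ^{1/2} ) )⁺ ]; (ii) if λ^{1/2} ≥ b₀/√D, then T^sig ≤ 2 (√D λ^{1/2} b₀^{D−1} z)^{−1} (1 + R⁺), where R = ln( (D z/2)^{1/(D+2)} / b₀ ) if D = 1 and R = 1/(D−1) if D > 1; here x⁺ = max(x,0). In particular T^sig is finite in both cases. -/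
/-!
Along the flow, `a² - β² = λ` and `b² - D β² = b₀²` are conserved, so `a ≥ max √λ β`
and `b ≥ max b₀ (√D β)`. As long as `θ < z/2` we have `β' ≥ a b^D z/2`. This first gives linear
growth `β t ≥ √λ b₀^D (z/2) t`, so that at the time `t₁` (the prefactor of the bound) `β` has
reached `√λ` in case (i) and `b₀/√D` in case (ii). From then on `β' ≥ r β` for a rate `r`
with `r t₁ = 1` (case (i), and case (ii) with `D = 1`): `β` grows exponentially until it
reaches `(D^(-D/2) z/2)^(1/(D+2))`, where `θ ≥ D^(D/2) β^(D+2) ≥ z/2`. For `D ≥ 2` instead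
`β' ≥ c β^D`, and `β^(1-D)` would reach `0` within the extra time `t₁/(D-1)`.
-/

open Real Set

theorem le_of_hasDerivAt_nonneg {f f' : ℝ → ℝ} {s e : ℝ} (hse : s ≤ e)
    (hf : ∀ t ∈ Icc s e, HasDerivAt f (f' t) t) (hf' : ∀ t ∈ Icc s e, 0 ≤ f' t) : f s ≤ f e :=
  monotoneOn_of_hasDerivWithinAt_nonneg (convex_Icc s e)
    (fun t ht => (hf t ht).continuousAt.continuousWithinAt)
    (fun t ht => (hf t (interior_subset ht)).hasDerivWithinAt)
    (fun t ht => hf' t (interior_subset ht)) (left_mem_Icc.2 hse) (right_mem_Icc.2 hse) hse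

theorem eq_of_hasDerivAt_zero {f : ℝ → ℝ} {s e : ℝ} (hse : s ≤ e)
    (hf : ∀ t ∈ Icc s e, HasDerivAt f 0 t) : f e = f s :=
  constant_of_has_deriv_right_zero (fun t ht => (hf t ht).continuousAt.continuousWithinAt)
    (fun t ht => (hf t (Ico_subset_Icc_self ht)).hasDerivWithinAt) e (right_mem_Icc.2 hse)

theorem mul_sub_le_sub_of_le_hasDerivAt {f f' : ℝ → ℝ} {C s e : ℝ} (hse : s ≤ e)
    (hf : ∀ t ∈ Icc s e, HasDerivAt f (f' t) t) (hC : ∀ t ∈ Icc s e, C ≤ f' t) :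
    C * (e - s) ≤ f e - f s := by
  have := le_of_hasDerivAt_nonneg hse (f := fun t => f t - C * t) (f' := fun t => f' t - C)
    (fun t ht => ((hf t ht).sub ((hasDerivAt_id t).const_mul C)).congr_deriv (by ring))
    (fun t ht => sub_nonneg.2 (hC t ht))
  linarith

theorem mul_exp_le_of_mul_le_hasDerivAt {f f' : ℝ → ℝ} {c s e : ℝ} (hse : s ≤ e)
    (hf : ∀ t ∈ Icc s e, HasDerivAt f (f' t) t) (hc : ∀ t ∈ Icc s e, c * f t ≤ f' t) :
    f s * exp (c * (e - s)) ≤ f e := by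
  have hmono := le_of_hasDerivAt_nonneg hse (f := fun t => f t * exp (-(c * t)))
    (f' := fun t => (f' t - c * f t) * exp (-(c * t)))
    (fun t ht => ((hf t ht).mul ((hasDerivAt_id t).const_mul c).neg.exp).congr_deriv
      (by simp only [Pi.neg_apply, id]; ring))
    (fun t ht => mul_nonneg (sub_nonneg.2 (hc t ht)) (exp_pos _).le)
  calc f s * exp (c * (e - s)) = f s * exp (-(c * s)) * exp (c * e) := by
        rw [mul_assoc, ← exp_add]; ring_nf
    _ ≤ f e * exp (-(c * e)) * exp (c * e) := by gcongr
    _ = f e := by rw [mul_assoc, ← exp_add, neg_add_cancel, exp_zero, mul_one]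

theorem mul_sub_le_inv_pow_sub_of_mul_pow_le_hasDerivAt {f f' : ℝ → ℝ} {n : ℕ} {c s e : ℝ}
    (hse : s ≤ e) (hpos : ∀ t ∈ Icc s e, 0 < f t) (hf : ∀ t ∈ Icc s e, HasDerivAt f (f' t) t)
    (hc : ∀ t ∈ Icc s e, c * f t ^ (n + 1) ≤ f' t) :
    n * c * (e - s) ≤ (f s ^ n)⁻¹ - (f e ^ n)⁻¹ := by
  have key := mul_sub_le_sub_of_le_hasDerivAt hse (f := fun t => -f t ^ (-(n : ℤ)))
    (f' := fun t => n * (f t ^ (-(n : ℤ) - 1) * f' t)) (C := n * c)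
    (fun t ht =>
      ((hasDerivAt_zpow _ _ (Or.inl (hpos t ht).ne')).comp t (hf t ht)).neg.congr_deriv
        (by push_cast; ring))
    (fun t ht => by
      have hcancel : f t ^ (-(n : ℤ) - 1) * f t ^ (n + 1) = 1 := by
        rw [← zpow_natCast, ← zpow_add₀ (hpos t ht).ne']
        simp
      calc (n : ℝ) * c = n * (f t ^ (-(n : ℤ) - 1) * (c * f t ^ (n + 1))) := by
            rw [mul_left_comm _ c, hcancel, mul_one]
        _ ≤ n * (f t ^ (-(n : ℤ) - 1) * f' t) := by
            gcongr
            · exact (zpow_pos (hpos t ht) _).le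
            · exact hc t ht)
  simp only [zpow_neg, zpow_natCast] at key
  linarith

theorem IsPreconnected.pos_of_forall_ne_zero {X : Type*} [TopologicalSpace X] {s : Set X}
    (hs : IsPreconnected s) {f : X → ℝ} (hf : ContinuousOn f s) {x y : X} (hx : x ∈ s)
    (hy : y ∈ s) (hfx : 0 < f x) (hne : ∀ t ∈ s, f t ≠ 0) : 0 < f y := by
  by_contra! hfy
  obtain ⟨t, ht, hft⟩ := hs.intermediate_value hy hx hf ⟨hfy, hfx.le⟩
  exact hne t ht hft

theorem rpow_one_div_add_two_pow {x : ℝ} (hx : 0 ≤ x) (n : ℕ) :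
    (x ^ (1 / ((n : ℝ) + 2))) ^ (n + 2) = x := by
  have := rpow_inv_natCast_pow hx (n := n + 2) (by omega)
  push_cast at this
  rwa [one_div]

theorem sqrt_pow_mul_rpow_neg_div_two {x : ℝ} (hx : 0 < x) (n : ℕ) :
    √x ^ n * x ^ (-(n : ℝ) / 2) = 1 := by
  rw [sqrt_eq_rpow, ← rpow_natCast, ← rpow_mul hx.le, ← rpow_add hx,
    show 1 / 2 * (n : ℝ) + -n / 2 = 0 by ring, rpow_zero]

theorem le_mul_exp_max_log {x B : ℝ} (hx : 0 < x) (hB : 0 < B) :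
    B ≤ x * exp (max (log (B / x)) 0) :=
  calc B = x * exp (log (B / x)) := by rw [exp_log (div_pos hB hx)]; field_simp
    _ ≤ x * exp (max (log (B / x)) 0) := by gcongr; exact le_max_left _ _

theorem nonempty_and_sInf_le_of_exists_mem_Icc {p : ℝ → Prop} {T : ℝ}
    (h : ∃ t ∈ Icc 0 T, p t) : {t | 0 ≤ t ∧ p t}.Nonempty ∧ sInf {t | 0 ≤ t ∧ p t} ≤ T := by
  obtain ⟨t, ⟨ht0, htT⟩, hpt⟩ := h
  exact ⟨⟨t, ht0, hpt⟩,
    (csInf_le (s := {t | 0 ≤ t ∧ p t}) ⟨0, fun _ hs => hs.1⟩ ⟨ht0, hpt⟩).trans htT⟩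

structure IsDeepFlow_s14 (D : ℕ) (lam b₀ z : ℝ) (a b β : ℝ → ℝ) : Prop where
  a_zero : a 0 = √lam
  b_zero : b 0 = b₀
  β_zero : β 0 = 0
  hasDerivAt_a : ∀ t : ℝ, 0 ≤ t →
    HasDerivAt a ((b t) ^ D * β t * (z - a t * (b t) ^ D * β t)) t
  hasDerivAt_b : ∀ t : ℝ, 0 ≤ t →
    HasDerivAt b ((D : ℝ) * a t * (b t) ^ (D - 1) * β t * (z - a t * (b t) ^ D * β t)) t
  hasDerivAt_β : ∀ t : ℝ, 0 ≤ t →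
    HasDerivAt β (a t * (b t) ^ D * (z - a t * (b t) ^ D * β t)) t

namespace IsDeepFlow_s14

variable {D : ℕ} {lam b₀ z : ℝ} {a b β : ℝ → ℝ}

theorem a_sq (h : IsDeepFlow_s14 D lam b₀ z a b β) (hlam : 0 ≤ lam) {t : ℝ} (ht : 0 ≤ t) :
    a t ^ 2 = lam + β t ^ 2 := by
  have := eq_of_hasDerivAt_zero ht (f := fun s => a s ^ 2 - β s ^ 2) fun s hs =>
    ((h.hasDerivAt_a s hs.1).pow 2).sub ((h.hasDerivAt_β s hs.1).pow 2) |>.congr_deriv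
      (by push_cast; ring)
  simp only [h.a_zero, h.β_zero, sq_sqrt hlam] at this
  linarith

theorem b_sq (h : IsDeepFlow_s14 D lam b₀ z a b β) {t : ℝ} (ht : 0 ≤ t) :
    b t ^ 2 = b₀ ^ 2 + D * β t ^ 2 := by
  have := eq_of_hasDerivAt_zero ht (f := fun s => b s ^ 2 - D * β s ^ 2) fun s hs =>
    ((h.hasDerivAt_b s hs.1).pow 2).sub (((h.hasDerivAt_β s hs.1).pow 2).const_mul (D : ℝ))
      |>.congr_deriv (by
        rcases D with _ | n
        · simp
        · push_cast; ring)
  simp only [h.b_zero, h.β_zero] at this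
  linarith

theorem a_pos (h : IsDeepFlow_s14 D lam b₀ z a b β) (hlam : 0 < lam) {t : ℝ} (ht : 0 ≤ t) :
    0 < a t :=
  isPreconnected_Ici.pos_of_forall_ne_zero
    (fun s hs => (h.hasDerivAt_a s hs).continuousAt.continuousWithinAt) self_mem_Ici ht
    (by rw [h.a_zero]; exact sqrt_pos.2 hlam)
    (fun s hs has => by nlinarith [h.a_sq hlam.le hs, sq_nonneg (β s)])

theorem b_pos (h : IsDeepFlow_s14 D lam b₀ z a b β) (hb₀ : 0 < b₀) {t : ℝ} (ht : 0 ≤ t) :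
    0 < b t :=
  isPreconnected_Ici.pos_of_forall_ne_zero
    (fun s hs => (h.hasDerivAt_b s hs).continuousAt.continuousWithinAt) self_mem_Ici ht
    (by rwa [h.b_zero])
    (fun s hs hbs => by
      have := h.b_sq hs
      rw [hbs] at this
      nlinarith [mul_nonneg (Nat.cast_nonneg' D) (sq_nonneg (β s))])

theorem sqrt_lam_le_a (h : IsDeepFlow_s14 D lam b₀ z a b β) (hlam : 0 < lam) {t : ℝ} (ht : 0 ≤ t) :
    √lam ≤ a t :=
  le_of_sq_le_sq (by rw [sq_sqrt hlam.le, h.a_sq hlam.le ht]; nlinarith [sq_nonneg (β t)])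
    (h.a_pos hlam ht).le

theorem β_le_a (h : IsDeepFlow_s14 D lam b₀ z a b β) (hlam : 0 < lam) {t : ℝ} (ht : 0 ≤ t) :
    β t ≤ a t :=
  le_of_sq_le_sq (by rw [h.a_sq hlam.le ht]; linarith) (h.a_pos hlam ht).le

theorem b₀_le_b (h : IsDeepFlow_s14 D lam b₀ z a b β) (hb₀ : 0 < b₀) {t : ℝ} (ht : 0 ≤ t) :
    b₀ ≤ b t :=
  le_of_sq_le_sq (by rw [h.b_sq ht]; nlinarith [mul_nonneg (Nat.cast_nonneg' D) (sq_nonneg (β t))])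
    (h.b_pos hb₀ ht).le

theorem sqrt_mul_β_le_b (h : IsDeepFlow_s14 D lam b₀ z a b β) (hb₀ : 0 < b₀) {t : ℝ} (ht : 0 ≤ t) :
    √D * β t ≤ b t :=
  le_of_sq_le_sq (by rw [mul_pow, sq_sqrt (Nat.cast_nonneg D), h.b_sq ht]; nlinarith)
    (h.b_pos hb₀ ht).le

theorem sqrt_pow_mul_pow_le_signal (h : IsDeepFlow_s14 D lam b₀ z a b β) (hlam : 0 < lam)
    (hb₀ : 0 < b₀) {t : ℝ} (ht : 0 ≤ t) (hβ : 0 ≤ β t) :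
    √D ^ D * β t ^ (D + 2) ≤ a t * b t ^ D * β t :=
  calc √D ^ D * β t ^ (D + 2) = β t * (√D * β t) ^ D * β t := by ring
    _ ≤ a t * b t ^ D * β t := by
      have := h.β_le_a hlam ht
      have := h.sqrt_mul_β_le_b hb₀ ht
      have := h.a_pos hlam ht
      gcongr

theorem mul_half_le_deriv_β_of_signal_lt (h : IsDeepFlow_s14 D lam b₀ z a b β) (hlam : 0 < lam)
    (hb₀ : 0 < b₀) {t : ℝ} (ht : 0 ≤ t) (hθ : a t * b t ^ D * β t < z / 2) :
    a t * b t ^ D * (z / 2) ≤ a t * b t ^ D * (z - a t * b t ^ D * β t) := by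
  have := h.a_pos hlam ht
  have := h.b_pos hb₀ ht
  gcongr
  linarith

theorem mul_le_β_of_signal_lt (h : IsDeepFlow_s14 D lam b₀ z a b β) (hlam : 0 < lam)
    (hb₀ : 0 < b₀) (hz : 0 < z) {T : ℝ} (hθ : ∀ t ∈ Icc 0 T, a t * b t ^ D * β t < z / 2) :
    ∀ t ∈ Icc 0 T, √lam * b₀ ^ D * (z / 2) * t ≤ β t := by
  intro t ht
  have := mul_sub_le_sub_of_le_hasDerivAt ht.1 (fun s hs => h.hasDerivAt_β s hs.1) fun s hs =>
    have hs0 : 0 ≤ s := hs.1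
    calc √lam * b₀ ^ D * (z / 2) ≤ a s * b s ^ D * (z / 2) := by
          have := h.sqrt_lam_le_a hlam hs0
          have := h.b₀_le_b hb₀ hs0
          have := h.a_pos hlam hs0
          gcongr
      _ ≤ _ := h.mul_half_le_deriv_β_of_signal_lt hlam hb₀ hs0 (hθ s ⟨hs0, hs.2.trans ht.2⟩)
  simpa [h.β_zero] using this

theorem exists_half_le_signal_of_exp_growth (h : IsDeepFlow_s14 D lam b₀ z a b β) (hlam : 0 < lam)
    (hb₀ : 0 < b₀) (hz : 0 < z) {t₁ r x₀ B : ℝ} (ht₁ : 0 < t₁) (hr : r * t₁ = 1) (hx₀ : 0 < x₀)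
    (hB : 0 < B) (hx₀t₁ : x₀ ≤ √lam * b₀ ^ D * (z / 2) * t₁)
    (hrate : ∀ t, 0 ≤ t → 0 ≤ β t → r * β t ≤ a t * b t ^ D * (z / 2))
    (hBz : z / 2 ≤ √D ^ D * B ^ (D + 2)) :
    ∃ t ∈ Icc 0 (t₁ * (1 + max (log (B / x₀)) 0)), z / 2 ≤ a t * b t ^ D * β t := by
  set L := max (log (B / x₀)) 0
  set T := t₁ * (1 + L)
  by_contra! hθ
  have ht₁T : t₁ ≤ T :=
    le_mul_of_one_le_right ht₁.le (by linarith [le_max_right (log (B / x₀)) 0])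
  have hβ_lower := h.mul_le_β_of_signal_lt hlam hb₀ hz hθ
  have hβt₁ : x₀ ≤ β t₁ := hx₀t₁.trans (hβ_lower _ ⟨ht₁.le, ht₁T⟩)
  have hgrowth : β t₁ * exp (r * (T - t₁)) ≤ β T :=
    mul_exp_le_of_mul_le_hasDerivAt ht₁T (fun t ht => h.hasDerivAt_β t (ht₁.le.trans ht.1))
      fun t ht =>
        have ht' : t ∈ Icc 0 T := ⟨ht₁.le.trans ht.1, ht.2⟩
        have hβt : 0 ≤ β t := le_trans (by have := ht'.1; positivity) (hβ_lower t ht')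
        (hrate t ht'.1 hβt).trans (h.mul_half_le_deriv_β_of_signal_lt hlam hb₀ ht'.1 (hθ t ht'))
  have hBT : B ≤ β T :=
    calc B ≤ x₀ * exp L := le_mul_exp_max_log hx₀ hB
      _ ≤ β t₁ * exp (r * (T - t₁)) := by
        rw [show r * (T - t₁) = L by linear_combination L * hr]
        gcongr
      _ ≤ β T := hgrowth
  have hT : 0 ≤ T := ht₁.le.trans ht₁T
  have hsignal := h.sqrt_pow_mul_pow_le_signal hlam hb₀ hT (hB.le.trans hBT)
  have : √D ^ D * B ^ (D + 2) ≤ √D ^ D * β T ^ (D + 2) := by gcongr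
  linarith [hθ T ⟨hT, le_rfl⟩]

theorem exists_half_le_signal_of_two_le (h : IsDeepFlow_s14 D lam b₀ z a b β) (hD : 2 ≤ D)
    (hlam : 0 < lam) (hb₀ : 0 < b₀) (hz : 0 < z) :
    ∃ t ∈ Icc 0 (2 * (√D * √lam * b₀ ^ (D - 1) * z)⁻¹ * (1 + 1 / ((D : ℝ) - 1))),
      z / 2 ≤ a t * b t ^ D * β t := by
  obtain ⟨n, hn⟩ : ∃ n, D = n + 1 := ⟨D - 1, by omega⟩
  have hn0 : (0 : ℝ) < n := by norm_cast; omega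
  rw [show D - 1 = n by omega, show (D : ℝ) - 1 = n by rw [hn]; push_cast; ring]
  set s := √(D : ℝ)
  have hs : 0 < s := sqrt_pos.2 (by norm_cast; omega)
  set t₁ := 2 * (s * √lam * b₀ ^ n * z)⁻¹
  set T := t₁ * (1 + 1 / n)
  set c := √lam * s ^ D * (z / 2)
  by_contra! hθ
  have ht₁ : 0 < t₁ := by positivity
  have ht₁T : t₁ ≤ T :=
    le_mul_of_one_le_right ht₁.le (by simp only [le_add_iff_nonneg_right]; positivity)
  have hβ_lower := h.mul_le_β_of_signal_lt hlam hb₀ hz hθ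
  have hβt₁ : b₀ / s ≤ β t₁ := by
    convert hβ_lower _ ⟨ht₁.le, ht₁T⟩ using 1
    simp only [t₁]
    rw [hn, pow_succ]
    field_simp
  have hβ_pos : ∀ t ∈ Icc t₁ T, 0 < β t := fun t ht =>
    lt_of_lt_of_le (by have := ht₁.trans_le ht.1; positivity)
      (hβ_lower _ ⟨ht₁.le.trans ht.1, ht.2⟩)
  have hrate : ∀ t ∈ Icc t₁ T,
      c * β t ^ (n + 1) ≤ a t * b t ^ D * (z - a t * b t ^ D * β t) := fun t ht => by
    have ht0 : 0 ≤ t := ht₁.le.trans ht.1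
    have := h.sqrt_lam_le_a hlam ht0
    have := h.sqrt_mul_β_le_b hb₀ ht0
    have := h.a_pos hlam ht0
    have := hβ_pos t ht
    calc c * β t ^ (n + 1) = √lam * (s * β t) ^ D * (z / 2) := by simp only [c]; rw [hn]; ring
      _ ≤ a t * b t ^ D * (z / 2) := by gcongr
      _ ≤ _ := h.mul_half_le_deriv_β_of_signal_lt hlam hb₀ ht0 (hθ t ⟨ht0, ht.2⟩)
  have hblowup := mul_sub_le_inv_pow_sub_of_mul_pow_le_hasDerivAt ht₁T hβ_pos
    (fun t ht => h.hasDerivAt_β t (ht₁.le.trans ht.1)) hrate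
  have hTt₁ : n * c * (T - t₁) = ((b₀ / s) ^ n)⁻¹ := by
    simp only [T, c, t₁]
    rw [hn, pow_succ, div_pow]
    field_simp
    ring
  have : (β t₁ ^ n)⁻¹ ≤ ((b₀ / s) ^ n)⁻¹ := by gcongr
  have : 0 < (β T ^ n)⁻¹ := by have := hβ_pos T ⟨ht₁T, le_rfl⟩; positivity
  linarith

theorem exists_half_le_signal (h : IsDeepFlow_s14 D lam b₀ z a b β) (hD : 1 ≤ D) (hlam : 0 < lam)
    (hb₀ : 0 < b₀) (hz : 0 < z) :
    ∃ t ∈ Icc 0 (2 * (b₀ ^ D * z)⁻¹ *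
      (1 + max (log ((((D : ℝ) ^ (-(D : ℝ) / 2) * z / 2) ^ (1 / ((D : ℝ) + 2))) / √lam)) 0)),
      z / 2 ≤ a t * b t ^ D * β t := by
  have hX : 0 < (D : ℝ) ^ (-(D : ℝ) / 2) * z / 2 := by positivity
  refine h.exists_half_le_signal_of_exp_growth hlam hb₀ hz (r := b₀ ^ D * z / 2) (by positivity)
    (by field_simp) (sqrt_pos.2 hlam) (by positivity) (le_of_eq (by field_simp))
    (fun t ht hβt => ?_) ?_
  · have := h.β_le_a hlam ht
    have := h.b₀_le_b hb₀ ht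
    have := h.a_pos hlam ht
    calc b₀ ^ D * z / 2 * β t = β t * b₀ ^ D * (z / 2) := by ring
      _ ≤ a t * b t ^ D * (z / 2) := by gcongr
  · rw [rpow_one_div_add_two_pow hX.le]
    linear_combination (-(z / 2)) * sqrt_pow_mul_rpow_neg_div_two (x := D) (by positivity) D

theorem exists_half_le_signal_of_eq_one (h : IsDeepFlow_s14 1 lam b₀ z a b β) (hlam : 0 < lam)
    (hb₀ : 0 < b₀) (hz : 0 < z) :
    ∃ t ∈ Icc 0 (2 * (√lam * z)⁻¹ * (1 + max (log ((z / 2) ^ (1 / (3 : ℝ)) / b₀)) 0)),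
      z / 2 ≤ a t * b t * β t := by
  have hrate (t : ℝ) (ht : 0 ≤ t) (hβt : 0 ≤ β t) :
      √lam * z / 2 * β t ≤ a t * b t ^ 1 * (z / 2) := by
    have := h.sqrt_lam_le_a hlam ht
    have hβb := h.sqrt_mul_β_le_b hb₀ ht
    have := h.a_pos hlam ht
    simp only [Nat.cast_one, sqrt_one, one_mul, pow_one] at hβb ⊢
    calc √lam * z / 2 * β t = √lam * β t * (z / 2) := by ring
      _ ≤ a t * b t * (z / 2) := by gcongr
  have hB : z / 2 ≤ √((1 : ℕ) : ℝ) ^ 1 * ((z / 2) ^ (1 / (3 : ℝ))) ^ (1 + 2) := by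
    have := rpow_one_div_add_two_pow (x := z / 2) (by positivity) 1
    norm_num at this ⊢
    rw [this]
  simpa using h.exists_half_le_signal_of_exp_growth hlam hb₀ hz (r := √lam * z / 2)
    (by positivity) (by field_simp) hb₀ (by positivity) (le_of_eq (by field_simp)) hrate hB

end IsDeepFlow_s14

/-- upper bounds on the signal hitting time
`T^sig = inf{ t ≥ 0 : θ(t) ≥ z/2 }` for the deep gradient flow with `D ≥ 1` and `z > 0`;
in particular the hitting set is nonempty (so `T^sig` is finite) in both cases. -/
theorem deep_flow_signal_time_bound
    (D : ℕ) (hD : 1 ≤ D) (lam b₀ z : ℝ) (hlam : 0 < lam) (hb₀ : 0 < b₀) (hz : 0 < z)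
    (a b β : ℝ → ℝ)
    (ha0 : a 0 = Real.sqrt lam) (hb0 : b 0 = b₀) (hβ0 : β 0 = 0)
    (ha : ∀ t : ℝ, 0 ≤ t →
      HasDerivAt a ((b t) ^ D * β t * (z - a t * (b t) ^ D * β t)) t)
    (hb : ∀ t : ℝ, 0 ≤ t →
      HasDerivAt b ((D : ℝ) * a t * (b t) ^ (D - 1) * β t * (z - a t * (b t) ^ D * β t)) t)
    (hβ : ∀ t : ℝ, 0 ≤ t →
      HasDerivAt β (a t * (b t) ^ D * (z - a t * (b t) ^ D * β t)) t) :
    (Real.sqrt lam ≤ b₀ / Real.sqrt (D : ℝ) →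
      {t : ℝ | 0 ≤ t ∧ z / 2 ≤ a t * (b t) ^ D * β t}.Nonempty ∧
      sInf {t : ℝ | 0 ≤ t ∧ z / 2 ≤ a t * (b t) ^ D * β t} ≤
        2 * (b₀ ^ D * z)⁻¹ *
          (1 + max (Real.log ((((D : ℝ) ^ (-(D : ℝ) / 2) * z / 2) ^ (1 / ((D : ℝ) + 2))) /
            Real.sqrt lam)) 0)) ∧
    (b₀ / Real.sqrt (D : ℝ) ≤ Real.sqrt lam →
      {t : ℝ | 0 ≤ t ∧ z / 2 ≤ a t * (b t) ^ D * β t}.Nonempty ∧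
      sInf {t : ℝ | 0 ≤ t ∧ z / 2 ≤ a t * (b t) ^ D * β t} ≤
        2 * (Real.sqrt (D : ℝ) * Real.sqrt lam * b₀ ^ (D - 1) * z)⁻¹ *
          (1 + max (if D = 1 then
              Real.log ((((D : ℝ) * z / 2) ^ (1 / ((D : ℝ) + 2))) / b₀)
            else 1 / ((D : ℝ) - 1)) 0)) := by
  have h : IsDeepFlow_s14 D lam b₀ z a b β := ⟨ha0, hb0, hβ0, ha, hb, hβ⟩
  refine ⟨fun _ => nonempty_and_sInf_le_of_exists_mem_Icc ?_,
    fun _ => nonempty_and_sInf_le_of_exists_mem_Icc ?_⟩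
  · exact h.exists_half_le_signal hD hlam hb₀ hz
  · obtain rfl | hD2 := hD.eq_or_lt
    · simpa [show (1 : ℝ) + 2 = 3 by norm_num] using h.exists_half_le_signal_of_eq_one hlam hb₀ hz
    · rw [if_neg hD2.ne', max_eq_left (one_div_nonneg.2 (sub_nonneg.2 (by exact_mod_cast hD)))]
      exact h.exists_half_le_signal_of_two_le hD2 hlam hb₀ hz
end

section
/- For the deep gradient flow with D ≥ 1 layers and z > 0, with T^sig = inf{ t ≥ 0 : θ(t) ≥ z/2 } assumed finite, for every t ≥ T^sig one has 0 ≤ z − θ(t) ≤ (z/2) · exp( −(1/4) D^{D/(D+2)} z^{(2D+2)/(D+2)} (t − T^sig) ). -/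
/-!
Along the flow, `θ = a b^D β` satisfies `(z - θ)' = -(z - θ) |∇θ|²`, so the gap `z - θ` keeps the
sign of its initial value `z` and `θ` increases. Hence `θ ≥ z/2` from `T^sig` on, and there the
weighted AM-GM inequality bounds `|∇θ|²` below by `D^{D/(D+2)} θ^{(2D+2)/(D+2)}`, which gives
exponential decay of the gap at the stated rate.
-/

open Real Set

/-- `|∇θ|²` for `θ = a b^D β`; the deep flow is the gradient flow `(a, b, β)' = (z - θ) ∇θ`. -/
def gradNormSq (D : ℕ) (a b β : ℝ) : ℝ :=
  (b ^ D * β) ^ 2 + (D * a * b ^ (D - 1) * β) ^ 2 + (a * b ^ D) ^ 2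

noncomputable def decayRate (D : ℕ) (z : ℝ) : ℝ :=
  1 / 4 * (D : ℝ) ^ ((D : ℝ) / ((D : ℝ) + 2)) * z ^ ((2 * (D : ℝ) + 2) / ((D : ℝ) + 2))

/-- Weighted AM-GM for `x², y², n w²` with weights `1, 1, n`. -/
theorem add_two_mul_rpow_le_sq_add_sq_add_sq (n : ℕ) (x y w : ℝ) :
    (n + 2) * ((n : ℝ) ^ ((n : ℝ) / (n + 2)) * ((x * y * w ^ n) ^ 2) ^ (1 / ((n : ℝ) + 2))) ≤
      x ^ 2 + y ^ 2 + (n * w) ^ 2 := by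
  have hn : (0 : ℝ) < n + 2 := by positivity
  have amgm := geom_mean_le_arith_mean3_weighted (p₁ := x ^ 2) (p₂ := y ^ 2) (p₃ := n * w ^ 2)
    (w₁ := 1 / (n + 2)) (w₂ := 1 / (n + 2)) (w₃ := n / (n + 2)) (by positivity) (by positivity)
    (by positivity) (by positivity) (by positivity) (by positivity) (by field_simp; ring)
  have geom : (x ^ 2) ^ (1 / ((n : ℝ) + 2)) * (y ^ 2) ^ (1 / ((n : ℝ) + 2)) *
      ((n : ℝ) * w ^ 2) ^ ((n : ℝ) / (n + 2)) =
      (n : ℝ) ^ ((n : ℝ) / (n + 2)) * ((x * y * w ^ n) ^ 2) ^ (1 / ((n : ℝ) + 2)) := by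
    have hw : (w ^ 2) ^ ((n : ℝ) / (n + 2)) = ((w ^ 2) ^ n) ^ (1 / ((n : ℝ) + 2)) := by
      rw [← rpow_natCast_mul (sq_nonneg w), mul_one_div]
    rw [mul_rpow (by positivity) (by positivity), hw, mul_left_comm,
      ← mul_rpow (by positivity) (by positivity), ← mul_rpow (by positivity) (by positivity)]
    ring_nf
  rw [geom] at amgm
  calc _ ≤ (n + 2) * (1 / (n + 2) * x ^ 2 + 1 / (n + 2) * y ^ 2 + n / (n + 2) * (n * w ^ 2)) :=
        mul_le_mul_of_nonneg_left amgm hn.le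
    _ = _ := by field_simp

theorem rpow_div_four_le_rpow {z θ : ℝ} (n : ℕ) (hz : 0 ≤ z) (hθ : z / 2 ≤ θ) :
    z ^ ((2 * (n : ℝ) + 2) / (n + 2)) / 4 ≤ θ ^ ((2 * (n : ℝ) + 2) / (n + 2)) := by
  set p := (2 * (n : ℝ) + 2) / (n + 2)
  have hp : 0 ≤ p := by positivity
  have hp2 : p ≤ 2 := by rw [div_le_iff₀ (by positivity)]; linarith
  have h2p : (2 : ℝ) ^ p ≤ 4 := by
    calc (2 : ℝ) ^ p ≤ 2 ^ (2 : ℝ) := rpow_le_rpow_of_exponent_le one_le_two hp2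
      _ = 4 := by norm_num
  calc z ^ p / 4 ≤ z ^ p / 2 ^ p := by gcongr
    _ = (z / 2) ^ p := (div_rpow hz zero_le_two p).symm
    _ ≤ θ ^ p := rpow_le_rpow (by positivity) hθ hp

theorem decayRate_le_gradNormSq {D : ℕ} {z a b β : ℝ} (hz : 0 ≤ z) (hθ : z / 2 ≤ a * b ^ D * β) :
    decayRate D z ≤ gradNormSq D a b β := by
  set θ := a * b ^ D * β
  have hθ0 : 0 ≤ θ := by linarith
  have hprod : b ^ D * β * (a * b ^ D) * (a * b ^ (D - 1) * β) ^ D = θ ^ (D + 1) := by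
    rcases D with _ | k
    · simp [θ]; ring
    · simp only [θ, Nat.add_sub_cancel]; ring
  have hgeom : ((θ ^ (D + 1)) ^ 2) ^ (1 / ((D : ℝ) + 2)) = θ ^ ((2 * (D : ℝ) + 2) / (D + 2)) := by
    rw [← pow_mul, ← rpow_natCast_mul hθ0]
    push_cast; ring_nf
  have amgm := add_two_mul_rpow_le_sq_add_sq_add_sq D (b ^ D * β) (a * b ^ D) (a * b ^ (D - 1) * β)
  rw [hprod, hgeom] at amgm
  calc decayRate D z
      = (D : ℝ) ^ ((D : ℝ) / (D + 2)) * (z ^ ((2 * (D : ℝ) + 2) / (D + 2)) / 4) := by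
        unfold decayRate; ring
    _ ≤ (D : ℝ) ^ ((D : ℝ) / (D + 2)) * θ ^ ((2 * (D : ℝ) + 2) / (D + 2)) := by
        gcongr; exact rpow_div_four_le_rpow D hz hθ
    _ ≤ (D + 2) * ((D : ℝ) ^ ((D : ℝ) / (D + 2)) * θ ^ ((2 * (D : ℝ) + 2) / (D + 2))) :=
        le_mul_of_one_le_left (by positivity) (by linarith [(D.cast_nonneg : (0 : ℝ) ≤ D)])
    _ ≤ gradNormSq D a b β := by unfold gradNormSq; linarith

theorem hasDerivAt_mul_pow_mul {a b β : ℝ → ℝ} {D : ℕ} {e s : ℝ}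
    (ha : HasDerivAt a (b s ^ D * β s * e) s)
    (hb : HasDerivAt b (D * a s * b s ^ (D - 1) * β s * e) s)
    (hβ : HasDerivAt β (a s * b s ^ D * e) s) :
    HasDerivAt (fun u => a u * b u ^ D * β u) (e * gradNormSq D (a s) (b s) (β s)) s := by
  refine ((ha.mul (hb.pow D)).mul hβ).congr_deriv ?_
  simp only [gradNormSq, Pi.mul_apply, Pi.pow_apply]
  ring

theorem pos_of_hasDerivAt_eq_neg_mul {r Q : ℝ → ℝ} {t₀ : ℝ} (hQ : ContinuousOn Q (Ici t₀))
    (hr : ∀ s, t₀ ≤ s → HasDerivAt r (-(r s * Q s)) s) (h₀ : 0 < r t₀) :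
    ∀ t, t₀ ≤ t → 0 < r t := by
  -- Integrating factor `exp ∫ Q`, with `Q` frozen left of `t₀` so that it is continuous on `ℝ`.
  set Q' : ℝ → ℝ := fun s => Q (max s t₀)
  have hQ' : Continuous Q' :=
    hQ.comp_continuous (continuous_id.max continuous_const) fun s => le_max_right s t₀
  set g : ℝ → ℝ := fun s => r s * exp (∫ u in t₀..s, Q' u)
  have hg : ∀ s, t₀ ≤ s → HasDerivAt g 0 s := by
    intro s hs
    refine ((hr s hs).mul (hQ'.integral_hasStrictDerivAt t₀ s).hasDerivAt.exp).congr_deriv ?_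
    simp only [Q', max_eq_left hs]
    ring
  intro t ht
  have hgt : g t = g t₀ := constant_of_has_deriv_right_zero
    (fun s hs => (hg s hs.1).continuousAt.continuousWithinAt)
    (fun s hs => (hg s hs.1).hasDerivWithinAt) t ⟨ht, le_rfl⟩
  have : 0 < g t := by simpa [hgt, g] using h₀
  exact (mul_pos_iff_of_pos_right (exp_pos _)).mp this

theorem le_mul_exp_of_hasDerivAt_le_neg_mul {r r' : ℝ → ℝ} {c T : ℝ}
    (hr : ∀ s, T ≤ s → HasDerivAt r (r' s) s) (hle : ∀ s, T ≤ s → r' s ≤ -(c * r s)) :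
    ∀ t, T ≤ t → r t ≤ r T * exp (-(c * (t - T))) := by
  set h : ℝ → ℝ := fun u => r u * exp (c * (u - T))
  have hh : ∀ s, T ≤ s → HasDerivAt h ((r' s + c * r s) * exp (c * (s - T))) s := by
    intro s hs
    refine ((hr s hs).mul (((hasDerivAt_id s).sub_const T).const_mul c).exp).congr_deriv ?_
    simp only [id, mul_one]
    ring
  have hanti : AntitoneOn h (Ici T) :=
    antitoneOn_of_hasDerivWithinAt_nonpos (convex_Ici T)
      (fun s hs => (hh s hs).continuousAt.continuousWithinAt)
      (fun s hs => (hh s (interior_subset hs)).hasDerivWithinAt)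
      (fun s hs => mul_nonpos_of_nonpos_of_nonneg
        (by linarith [hle s (interior_subset hs)]) (exp_pos _).le)
  intro t ht
  have hdecay : h t ≤ h T := hanti self_mem_Ici ht ht
  simp only [h, sub_self, mul_zero, exp_zero, mul_one] at hdecay
  rw [exp_neg, ← div_eq_mul_inv, le_div_iff₀ (exp_pos _)]
  exact hdecay

theorem csInf_mem_of_continuousOn_Ici {f : ℝ → ℝ} {t₀ c : ℝ} (hf : ContinuousOn f (Ici t₀))
    (hne : {t | t₀ ≤ t ∧ c ≤ f t}.Nonempty) :
    sInf {t | t₀ ≤ t ∧ c ≤ f t} ∈ {t | t₀ ≤ t ∧ c ≤ f t} := by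
  have hclosed : IsClosed {t | t₀ ≤ t ∧ c ≤ f t} :=
    hf.preimage_isClosed_of_isClosed isClosed_Ici isClosed_Ici
  exact hclosed.csInf_mem hne ⟨t₀, fun t ht => ht.1⟩

theorem deep_flow_final_convergence_general
    (D : ℕ) (z : ℝ) (hz : 0 < z)
    (a b β : ℝ → ℝ)
    (hβ0 : β 0 = 0)
    (ha : ∀ t : ℝ, 0 ≤ t →
      HasDerivAt a ((b t) ^ D * β t * (z - a t * (b t) ^ D * β t)) t)
    (hb : ∀ t : ℝ, 0 ≤ t →
      HasDerivAt b ((D : ℝ) * a t * (b t) ^ (D - 1) * β t * (z - a t * (b t) ^ D * β t)) t)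
    (hβ : ∀ t : ℝ, 0 ≤ t →
      HasDerivAt β (a t * (b t) ^ D * (z - a t * (b t) ^ D * β t)) t)
    (hne : {t : ℝ | 0 ≤ t ∧ z / 2 ≤ a t * (b t) ^ D * β t}.Nonempty)
    (Tsig : ℝ) (hTsig : Tsig = sInf {t : ℝ | 0 ≤ t ∧ z / 2 ≤ a t * (b t) ^ D * β t}) :
    ∀ t : ℝ, Tsig ≤ t →
      0 ≤ z - a t * (b t) ^ D * β t ∧
      z - a t * (b t) ^ D * β t ≤
        (z / 2) * Real.exp (-(1 / 4) * (D : ℝ) ^ ((D : ℝ) / ((D : ℝ) + 2)) *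
          z ^ ((2 * (D : ℝ) + 2) / ((D : ℝ) + 2)) * (t - Tsig)) := by
  set θ : ℝ → ℝ := fun s => a s * b s ^ D * β s
  set Q : ℝ → ℝ := fun s => gradNormSq D (a s) (b s) (β s)
  have hθ' : ∀ s, 0 ≤ s → HasDerivAt θ ((z - θ s) * Q s) s := fun s hs =>
    hasDerivAt_mul_pow_mul (ha s hs) (hb s hs) (hβ s hs)
  have hQ : ContinuousOn Q (Ici 0) := fun s hs => by
    have := (ha s hs).continuousAt
    have := (hb s hs).continuousAt
    have := (hβ s hs).continuousAt
    unfold Q gradNormSq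
    fun_prop
  have hgap : ∀ s, 0 ≤ s → 0 < z - θ s :=
    pos_of_hasDerivAt_eq_neg_mul hQ (fun s hs => (hθ' s hs).const_sub z) (by simpa [θ, hβ0])
  have hmono : MonotoneOn θ (Ici 0) :=
    monotoneOn_of_hasDerivWithinAt_nonneg (convex_Ici 0)
      (fun s hs => (hθ' s hs).continuousAt.continuousWithinAt)
      (fun s hs => (hθ' s (interior_subset hs)).hasDerivWithinAt)
      (fun s hs => mul_nonneg (hgap s (interior_subset hs)).le (by unfold Q gradNormSq; positivity))
  obtain ⟨hT0, hTθ⟩ : Tsig ∈ {t | 0 ≤ t ∧ z / 2 ≤ θ t} := hTsig ▸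
    csInf_mem_of_continuousOn_Ici (fun s hs => (hθ' s hs).continuousAt.continuousWithinAt) hne
  have hrate : ∀ s, Tsig ≤ s → decayRate D z ≤ Q s := fun s hs =>
    decayRate_le_gradNormSq hz.le (hTθ.trans (hmono hT0 (hT0.trans hs) hs))
  intro t ht
  refine ⟨(hgap t (hT0.trans ht)).le, ?_⟩
  have hdecay := le_mul_exp_of_hasDerivAt_le_neg_mul (c := decayRate D z)
    (fun s hs => (hθ' s (hT0.trans hs)).const_sub z)
    (fun s hs => by nlinarith [hrate s hs, hgap s (hT0.trans hs)]) t ht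
  calc z - θ t ≤ (z - θ Tsig) * exp (-(decayRate D z * (t - Tsig))) := hdecay
    _ ≤ z / 2 * exp (-(decayRate D z * (t - Tsig))) := by gcongr; linarith
    _ = _ := by unfold decayRate; ring_nf

/-- exponential convergence of the deep gradient flow after the signal
hitting time `T^sig = inf{ t ≥ 0 : θ(t) ≥ z/2 }` (assumed finite, i.e. the hitting set
is nonempty): for `t ≥ T^sig`,
`0 ≤ z − θ(t) ≤ (z/2) exp(−(1/4) D^{D/(D+2)} z^{(2D+2)/(D+2)} (t − T^sig))`. -/
theorem deep_flow_final_convergence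
    (D : ℕ) (hD : 1 ≤ D) (lam b₀ z : ℝ) (hlam : 0 < lam) (hb₀ : 0 < b₀) (hz : 0 < z)
    (a b β : ℝ → ℝ)
    (ha0 : a 0 = Real.sqrt lam) (hb0 : b 0 = b₀) (hβ0 : β 0 = 0)
    (ha : ∀ t : ℝ, 0 ≤ t →
      HasDerivAt a ((b t) ^ D * β t * (z - a t * (b t) ^ D * β t)) t)
    (hb : ∀ t : ℝ, 0 ≤ t →
      HasDerivAt b ((D : ℝ) * a t * (b t) ^ (D - 1) * β t * (z - a t * (b t) ^ D * β t)) t)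
    (hβ : ∀ t : ℝ, 0 ≤ t →
      HasDerivAt β (a t * (b t) ^ D * (z - a t * (b t) ^ D * β t)) t)
    (hne : {t : ℝ | 0 ≤ t ∧ z / 2 ≤ a t * (b t) ^ D * β t}.Nonempty)
    (Tsig : ℝ) (hTsig : Tsig = sInf {t : ℝ | 0 ≤ t ∧ z / 2 ≤ a t * (b t) ^ D * β t}) :
    ∀ t : ℝ, Tsig ≤ t →
      0 ≤ z - a t * (b t) ^ D * β t ∧
      z - a t * (b t) ^ D * β t ≤
        (z / 2) * Real.exp (-(1 / 4) * (D : ℝ) ^ ((D : ℝ) / ((D : ℝ) + 2)) *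
          z ^ ((2 * (D : ℝ) + 2) / ((D : ℝ) + 2)) * (t - Tsig)) :=
  deep_flow_final_convergence_general D z hz a b β hβ0 ha hb hβ hne Tsig hTsig
end
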